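/- arXiv:2407.04878 — 5 statements merged into one kernel-verified Lean document; each statement's English description precedes it below -/
import Mathlib

section
/- The map that sends a pair (μ, S), where S ⊆ I is closed and μ is a locally finite measure on I \ S, to the measure m on I defined by m(A) = μ(A) if A ∩ S = ∅ and m(A) = ∞ if A ∩ S ≠ ∅, is a bijection onto the set M(I) of regular nonnegative [0,∞]-valued measures on I, with inverse m ↦ (m|_{I \ e(m)}, e(m)). -/
open MeasureTheory Set ENNReal Topology Filter TopologicalSpace

noncomputable section

/-- A nonnegative `[0,∞]`-valued Borel measure is *regular* if it is outer regular over
open sets and inner regular over compact sets. -/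
def IsRegularM {X : Type*} [TopologicalSpace X] [MeasurableSpace X] (m : Measure X) : Prop :=
  (∀ A : Set X, MeasurableSet A → m A = ⨅ (U : Set X) (_ : IsOpen U ∧ A ⊆ U), m U) ∧
  (∀ A : Set X, MeasurableSet A → m A = ⨆ (K : Set X) (_ : IsCompact K ∧ K ⊆ A), m K)

/-- The explosion set `e(m)`: points all of whose neighborhoods have infinite measure. -/
def explosionSet (I : Set ℝ) (m : Measure ↥I) : Set ↥I :=
  {x | ∀ ε : ℝ, 0 < ε → m {y : ↥I | |(y : ℝ) - (x : ℝ)| < ε} = ∞}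

/-- A pair `(μ, S)` with `S ⊆ I` closed and `μ` a locally finite measure on `I \ S`,
the latter being encoded as a measure on `I` vanishing on `S` and locally finite at
every point of `I \ S`. -/
structure MuS (I : Set ℝ) where
  S : Set ↥I
  μ : Measure ↥I
  closedS : IsClosed S
  nullS : μ S = 0
  locFin : ∀ x : ↥I, x ∉ S →
    ∃ ε : ℝ, 0 < ε ∧ μ {y : ↥I | |(y : ℝ) - (x : ℝ)| < ε} < ∞

/-- The measure `m` associated to a pair `(μ, S)`: it agrees with `μ` off `S` and is
infinite on every set meeting `S`. -/
def MuS.toMeasure {I : Set ℝ} (p : MuS I) : Measure ↥I :=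
  p.μ + Measure.sum (fun x : ↥p.S => (∞ : ℝ≥0∞) • Measure.dirac (x : ↥I))

section Aux

variable {I : Set ℝ}

lemma ballSet_eq (x : ↥I) (ε : ℝ) :
    {y : ↥I | |(y : ℝ) - (x : ℝ)| < ε} = Metric.ball x ε := by
  ext y
  simp [Metric.mem_ball, Subtype.dist_eq, Real.dist_eq]

lemma MuS.toMeasure_apply_of_disjoint (p : MuS I) {A : Set ↥I} (hA : MeasurableSet A)
    (h : A ∩ p.S = ∅) : p.toMeasure A = p.μ A := by
  rw [MuS.toMeasure, Measure.add_apply, Measure.sum_apply _ hA]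
  have hz : ∀ x : ↥p.S, ((∞ : ℝ≥0∞) • Measure.dirac (x : ↥I)) A = 0 := by
    intro x
    have hx : (x : ↥I) ∉ A := fun hxA =>
      (eq_empty_iff_forall_notMem.1 h (x : ↥I)) ⟨hxA, x.2⟩
    rw [Measure.smul_apply, smul_eq_mul, Measure.dirac_apply' _ hA,
      indicator_of_notMem hx, mul_zero]
  simp [hz]

lemma MuS.toMeasure_eq_top (p : MuS I) {A : Set ↥I} {x : ↥I}
    (hxA : x ∈ A) (hxS : x ∈ p.S) : p.toMeasure A = ∞ := by
  have h1 : p.toMeasure {x} = ∞ := by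
    rw [MuS.toMeasure, Measure.add_apply,
      Measure.sum_apply _ (measurableSet_singleton x)]
    have hterm : ((∞ : ℝ≥0∞) • Measure.dirac ((⟨x, hxS⟩ : ↥p.S) : ↥I)) {x} = ∞ := by
      rw [Measure.smul_apply, smul_eq_mul, Measure.dirac_apply_of_mem (mem_singleton x),
        mul_one]
    refine top_le_iff.1 ?_
    calc (∞ : ℝ≥0∞) = _ := hterm.symm
      _ ≤ ∑' x' : ↥p.S, ((∞ : ℝ≥0∞) • Measure.dirac (x' : ↥I)) {x} :=
        ENNReal.le_tsum _
      _ ≤ _ := le_add_self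
  exact top_le_iff.1 (h1 ▸ measure_mono (singleton_subset_iff.2 hxA))

lemma MuS.regularM (p : MuS I) (hIopen : IsOpen I) : IsRegularM p.toMeasure := by
  haveI hIlc : LocallyCompactSpace ↥I := hIopen.isOpenEmbedding_subtypeVal.locallyCompactSpace
  set V : Set ↥I := p.Sᶜ with hVdef
  have hV : IsOpen V := p.closedS.isOpen_compl
  have hVm : MeasurableSet V := hV.measurableSet
  have he : MeasurableEmbedding ((↑) : ↥V → ↥I) := MeasurableEmbedding.subtype_coe hVm
  haveI : LocallyCompactSpace ↥V := hV.isOpenEmbedding_subtypeVal.locallyCompactSpace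
  set μ₀ : Measure ↥V := p.μ.comap (↑) with hμ₀def
  have hap : ∀ s : Set ↥V, μ₀ s = p.μ (((↑) : ↥V → ↥I) '' s) := fun s => he.comap_apply _ _
  haveI : IsLocallyFiniteMeasure μ₀ := by
    constructor
    intro x
    obtain ⟨ε, hε, hfin⟩ := p.locFin (x : ↥I) x.2
    refine ⟨((↑) : ↥V → ↥I) ⁻¹' Metric.ball (x : ↥I) ε, ?_, ?_⟩
    · exact IsOpen.mem_nhds (Metric.isOpen_ball.preimage continuous_subtype_val)
        (by simp [Metric.mem_ball, hε])
    · rw [hap]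
      rw [ballSet_eq] at hfin
      exact lt_of_le_of_lt (measure_mono (image_preimage_subset _ _)) hfin
  constructor
  · -- outer regularity
    intro A hA
    refine le_antisymm (le_iInf₂ fun U hU => measure_mono hU.2) ?_
    rcases eq_empty_or_nonempty (A ∩ p.S) with hAS | ⟨x, hxA, hxS⟩
    · have hAV : A ⊆ V := fun y hy =>
        fun hyS => (eq_empty_iff_forall_notMem.1 hAS y) ⟨hy, hyS⟩
      set B : Set ↥V := ((↑) : ↥V → ↥I) ⁻¹' A with hBdef
      have hBim : ((↑) : ↥V → ↥I) '' B = A := by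
        rw [hBdef, Subtype.image_preimage_coe, inter_eq_right.2 hAV]
      have hmA : p.toMeasure A = μ₀ B := by
        rw [p.toMeasure_apply_of_disjoint hA hAS, hap, hBim]
      rw [hmA, B.measure_eq_iInf_isOpen μ₀]
      refine le_iInf fun U' => le_iInf fun hBU' => le_iInf fun hU'open => ?_
      have himopen : IsOpen (((↑) : ↥V → ↥I) '' U') :=
        hV.isOpenEmbedding_subtypeVal.isOpenMap _ hU'open
      have himV : ((↑) : ↥V → ↥I) '' U' ⊆ V := by
        rintro _ ⟨z, _, rfl⟩; exact z.2
      have hd : (((↑) : ↥V → ↥I) '' U') ∩ p.S = ∅ := by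
        rw [eq_empty_iff_forall_notMem]
        rintro z ⟨hz1, hz2⟩; exact himV hz1 hz2
      refine le_trans (iInf₂_le (((↑) : ↥V → ↥I) '' U')
        ⟨himopen, by rw [← hBim]; exact image_mono hBU'⟩) ?_
      rw [p.toMeasure_apply_of_disjoint himopen.measurableSet hd, ← hap]
    · -- A meets S : measure is ∞, infimum is trivially ≤
      rw [p.toMeasure_eq_top hxA hxS]
      exact le_top
  · -- inner regularity
    intro A hA
    refine le_antisymm ?_ (iSup₂_le fun K hK => measure_mono hK.2)
    rcases eq_empty_or_nonempty (A ∩ p.S) with hAS | ⟨x, hxA, hxS⟩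
    · have hAV : A ⊆ V := fun y hy =>
        fun hyS => (eq_empty_iff_forall_notMem.1 hAS y) ⟨hy, hyS⟩
      set B : Set ↥V := ((↑) : ↥V → ↥I) ⁻¹' A with hBdef
      have hBm : MeasurableSet B := he.measurable hA
      have hBim : ((↑) : ↥V → ↥I) '' B = A := by
        rw [hBdef, Subtype.image_preimage_coe, inter_eq_right.2 hAV]
      have hmA : p.toMeasure A = μ₀ B := by
        rw [p.toMeasure_apply_of_disjoint hA hAS, hap, hBim]
      rw [hmA]
      refine le_of_forall_lt fun r hr => ?_
      obtain ⟨K', hK'B, hK'c, hrK'⟩ := hBm.exists_lt_isCompact hr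
      have hKc : IsCompact (((↑) : ↥V → ↥I) '' K') := hK'c.image continuous_subtype_val
      have hKA : ((↑) : ↥V → ↥I) '' K' ⊆ A := by
        rw [← hBim]; exact image_mono hK'B
      have hd : (((↑) : ↥V → ↥I) '' K') ∩ p.S = ∅ := by
        rw [eq_empty_iff_forall_notMem]
        rintro z ⟨⟨w, _, rfl⟩, hz2⟩; exact w.2 hz2
      have hKval : p.toMeasure (((↑) : ↥V → ↥I) '' K') = μ₀ K' := by
        rw [p.toMeasure_apply_of_disjoint hKc.isClosed.measurableSet hd, ← hap]
      calc r < μ₀ K' := hrK'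
        _ = p.toMeasure (((↑) : ↥V → ↥I) '' K') := hKval.symm
        _ ≤ _ := le_iSup₂ (f := fun K (_ : IsCompact K ∧ K ⊆ A) => p.toMeasure K)
            (((↑) : ↥V → ↥I) '' K') ⟨hKc, hKA⟩
    · calc p.toMeasure A = p.toMeasure {x} := by
            rw [p.toMeasure_eq_top hxA hxS, p.toMeasure_eq_top (mem_singleton x) hxS]
        _ ≤ _ := le_iSup₂ (f := fun K (_ : IsCompact K ∧ K ⊆ A) => p.toMeasure K)
            ({x} : Set ↥I) ⟨isCompact_singleton, singleton_subset_iff.2 hxA⟩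

end Aux

/-- The map `(μ, S) ↦ m` given by `m(A) = μ(A)` if `A ∩ S = ∅` and `m(A) = ∞` otherwise
is a bijection onto the set of regular `[0,∞]`-valued measures on `I`, with inverse
`m ↦ (m|_{I \ e(m)}, e(m))`. -/
theorem stmt_2 (I : Set ℝ) (hIopen : IsOpen I) (hIconn : I.OrdConnected) :
    (∀ (p : MuS I) (A : Set ↥I), MeasurableSet A →
        (A ∩ p.S = ∅ → p.toMeasure A = p.μ A) ∧ (A ∩ p.S ≠ ∅ → p.toMeasure A = ∞)) ∧
    Set.BijOn (fun p : MuS I => p.toMeasure) Set.univ {m : Measure ↥I | IsRegularM m} ∧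
    (∀ p : MuS I,
        explosionSet I p.toMeasure = p.S ∧ p.toMeasure.restrict (p.S)ᶜ = p.μ) := by
  have part1 : ∀ (p : MuS I) (A : Set ↥I), MeasurableSet A →
      (A ∩ p.S = ∅ → p.toMeasure A = p.μ A) ∧ (A ∩ p.S ≠ ∅ → p.toMeasure A = ∞) := by
    intro p A hA
    refine ⟨fun h => p.toMeasure_apply_of_disjoint hA h, fun h => ?_⟩
    obtain ⟨x, hxA, hxS⟩ := nonempty_iff_ne_empty.2 h
    exact p.toMeasure_eq_top hxA hxS
  have part3 : ∀ p : MuS I,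
      explosionSet I p.toMeasure = p.S ∧ p.toMeasure.restrict (p.S)ᶜ = p.μ := by
    intro p
    constructor
    · ext x
      constructor
      · intro hx
        by_contra hxS
        obtain ⟨ε, hε, hfin⟩ := p.locFin x hxS
        obtain ⟨ε', hε', hball⟩ :=
          Metric.mem_nhds_iff.1 ((p.closedS.isOpen_compl).mem_nhds hxS)
        have hδ : 0 < min ε ε' := lt_min hε hε'
        have hx' := hx (min ε ε') hδ
        have hdisj : {y : ↥I | |(y : ℝ) - (x : ℝ)| < min ε ε'} ∩ p.S = ∅ := by
          rw [ballSet_eq, eq_empty_iff_forall_notMem]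
          rintro z ⟨hz1, hz2⟩
          exact hball (Metric.ball_subset_ball (min_le_right _ _) hz1) hz2
        have hmeas : MeasurableSet {y : ↥I | |(y : ℝ) - (x : ℝ)| < min ε ε'} := by
          rw [ballSet_eq]; exact Metric.isOpen_ball.measurableSet
        rw [p.toMeasure_apply_of_disjoint hmeas hdisj] at hx'
        have hsub : {y : ↥I | |(y : ℝ) - (x : ℝ)| < min ε ε'} ⊆
            {y : ↥I | |(y : ℝ) - (x : ℝ)| < ε} :=
          fun y hy => by
            simp only [mem_setOf_eq] at hy ⊢
            exact lt_of_lt_of_le hy (min_le_left _ _)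
        exact (lt_of_le_of_lt (measure_mono hsub) hfin).ne hx'
      · intro hxS ε hε
        exact p.toMeasure_eq_top (by simpa using hε) hxS
    · ext A hA
      have hd : (A ∩ (p.S)ᶜ) ∩ p.S = ∅ := by
        rw [inter_assoc, compl_inter_self, inter_empty]
      rw [Measure.restrict_apply hA,
        p.toMeasure_apply_of_disjoint (hA.inter p.closedS.isOpen_compl.measurableSet) hd,
        inter_comm, ← diff_eq_compl_inter, measure_diff_null p.nullS]
  refine ⟨part1, ⟨fun p _ => p.regularM hIopen, ?_, ?_⟩, part3⟩
  · -- injectivity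
    intro p _ q _ h
    simp only at h
    have hS : p.S = q.S := by rw [← (part3 p).1, ← (part3 q).1, h]
    have hμ : p.μ = q.μ := by rw [← (part3 p).2, ← (part3 q).2, h, hS]
    cases p; cases q
    simp only at hS hμ
    subst hS; subst hμ; rfl
  · -- surjectivity
    rintro m hm
    obtain ⟨houter, hinner⟩ := hm
    set S : Set ↥I := explosionSet I m with hSdef
    have hSc : IsClosed S := by
      rw [← isOpen_compl_iff, Metric.isOpen_iff]
      intro x hx
      simp only [hSdef, explosionSet, mem_compl_iff, mem_setOf_eq, not_forall] at hx
      push_neg at hx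
      obtain ⟨ε, hε, hne⟩ := hx
      refine ⟨ε / 2, by positivity, fun y hy => ?_⟩
      simp only [hSdef, explosionSet, mem_compl_iff, mem_setOf_eq]
      push_neg
      refine ⟨ε / 2, by positivity, ?_⟩
      intro htop
      apply hne
      refine top_le_iff.1 ?_
      rw [← htop, ballSet_eq, ballSet_eq]
      refine measure_mono (Metric.ball_subset_ball' ?_)
      rw [Metric.mem_ball] at hy
      linarith
    have hSm : MeasurableSet S := hSc.measurableSet
    set μ' : Measure ↥I := m.restrict Sᶜ with hμ'def
    have hnull : μ' S = 0 := by
      rw [hμ'def, Measure.restrict_apply hSm, inter_compl_self, measure_empty]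
    have hlf : ∀ x : ↥I, x ∉ S →
        ∃ ε : ℝ, 0 < ε ∧ μ' {y : ↥I | |(y : ℝ) - (x : ℝ)| < ε} < ∞ := by
      intro x hx
      simp only [hSdef, explosionSet, mem_setOf_eq, not_forall] at hx
      push_neg at hx
      obtain ⟨ε, hε, hne⟩ := hx
      refine ⟨ε, hε, ?_⟩
      have hmeas : MeasurableSet {y : ↥I | |(y : ℝ) - (x : ℝ)| < ε} := by
        rw [ballSet_eq]; exact Metric.isOpen_ball.measurableSet
      rw [hμ'def, Measure.restrict_apply hmeas]
      exact lt_of_le_of_lt (measure_mono inter_subset_left) (lt_top_iff_ne_top.2 hne)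
    refine ⟨⟨S, μ', hSc, hnull, hlf⟩, mem_univ _, ?_⟩
    simp only
    ext A hA
    rcases eq_empty_or_nonempty (A ∩ S) with hAS | ⟨x, hxA, hxS⟩
    · have hAV : A ⊆ Sᶜ := fun y hy hyS =>
        (eq_empty_iff_forall_notMem.1 hAS y) ⟨hy, hyS⟩
      rw [MuS.toMeasure_apply_of_disjoint _ hA hAS]
      simp only [hμ'def]
      rw [Measure.restrict_apply hA, inter_eq_left.2 hAV]
    · rw [MuS.toMeasure_eq_top _ hxA hxS]
      symm
      rw [houter A hA]
      simp only [iInf_eq_top]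
      rintro U ⟨hUopen, hAU⟩
      obtain ⟨ε, hε, hball⟩ := Metric.isOpen_iff.1 hUopen x (hAU hxA)
      refine top_le_iff.1 ?_
      have := hxS ε hε
      rw [← this, ballSet_eq]
      exact measure_mono hball
end
end

section
/- The topological space (M(I), ϑ) of regular nonnegative [0,∞]-valued measures on an open interval I, with the topology generated by lower semicontinuity of m ↦ m((a,b)) and upper semicontinuity of m ↦ m([a,b]) over rational endpoints, is Hausdorff. -/
open MeasureTheory Set ENNReal Topology Filter TopologicalSpace

noncomputable section

/-- The open interval `(a,b)` of `I`. -/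
def IooI (I : Set ℝ) (a b : ℝ) : Set ↥I := {y : ↥I | a < (y : ℝ) ∧ (y : ℝ) < b}

/-- The compact interval `[a,b]` of `I`. -/
def IccI (I : Set ℝ) (a b : ℝ) : Set ↥I := {y : ↥I | a ≤ (y : ℝ) ∧ (y : ℝ) ≤ b}

/-- The topology `ϑ`: the coarsest topology on measures over `I` such that
`m ↦ m((a,b))` is lower semicontinuous and `m ↦ m([a,b])` is upper semicontinuous for
rational `a, b ∈ I`.  It is generated by the subbasic sets `{m | m((a,b)) > c}` and
`{m | m([a,b]) < d}`. -/
instance thetaTop (I : Set ℝ) : TopologicalSpace (Measure ↥I) :=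
  TopologicalSpace.generateFrom
    ({U | ∃ (a b : ℚ) (c : ℝ≥0∞), (a : ℝ) ∈ I ∧ (b : ℝ) ∈ I ∧ (a : ℝ) < b ∧
        U = {m : Measure ↥I | c < m (IooI I a b)}} ∪
     {U | ∃ (a b : ℚ) (d : ℝ≥0∞), (a : ℝ) ∈ I ∧ (b : ℝ) ∈ I ∧ (a : ℝ) ≤ b ∧
        U = {m : Measure ↥I | m (IccI I a b) < d}})

/-- The space `M(I)` of regular nonnegative `[0,∞]`-valued measures on `I`,
with the subspace topology inherited from `ϑ`. -/
abbrev MSpace (I : Set ℝ) : Type := {m : Measure ↥I // IsRegularM m}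

lemma IccI_eq_preimage (I : Set ℝ) (a b : ℝ) :
    IccI I a b = Subtype.val ⁻¹' Set.Icc a b := rfl

lemma IooI_eq_preimage (I : Set ℝ) (a b : ℝ) :
    IooI I a b = Subtype.val ⁻¹' Set.Ioo a b := rfl

lemma measurableSet_preimage_val {I : Set ℝ} {S : Set ℝ} (hS : MeasurableSet S) :
    MeasurableSet (Subtype.val ⁻¹' S : Set ↥I) :=
  measurable_subtype_coe hS

/-- If two measures agree on all rational compact intervals of `I`, they agree on all
rational half-open intervals contained in `I`. -/
lemma agree_Ico {I : Set ℝ} {m m' : Measure ↥I}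
    (H : ∀ a b : ℚ, (a : ℝ) ∈ I → (b : ℝ) ∈ I → (a : ℝ) ≤ b →
      m (IccI I a b) = m' (IccI I a b))
    (a b : ℚ) (ha : (a : ℝ) ∈ I) (hab : ∀ x : ℝ, (a : ℝ) ≤ x → x < (b : ℝ) → x ∈ I) :
    m (Subtype.val ⁻¹' Set.Ico (a : ℝ) (b : ℝ)) =
      m' (Subtype.val ⁻¹' Set.Ico (a : ℝ) (b : ℝ)) := by
  rcases le_or_gt b a with h | h
  · have he : (Subtype.val ⁻¹' Set.Ico (a : ℝ) (b : ℝ) : Set ↥I) = ∅ := by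
      ext y
      simp only [Set.mem_preimage, Set.mem_Ico, Set.mem_empty_iff_false, iff_false, not_and,
        not_lt]
      intro hy
      exact le_trans (by exact_mod_cast h) hy
    simp [he]
  · -- a < b
    set c : ℕ → ℚ := fun n => b - (b - a) / (n + 1) with hc
    have hc_mem : ∀ n, a ≤ c n ∧ (c n : ℚ) < b := by
      intro n
      have hn1 : (1 : ℚ) ≤ (n : ℚ) + 1 := by
        have : (0 : ℚ) ≤ (n : ℚ) := Nat.cast_nonneg n
        linarith
      constructor
      · have h1 : (b - a) / (n + 1 : ℚ) ≤ b - a := div_le_self (by linarith) hn1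
        simp only [hc]
        linarith
      · have h1 : (0 : ℚ) < (b - a) / (n + 1) := div_pos (by linarith) (by positivity)
        simp only [hc]; linarith
    have hc_monotone : Monotone fun n : ℕ => (Subtype.val ⁻¹' Set.Icc (a : ℝ) ((c n : ℚ) : ℝ) : Set ↥I) := by
      intro i j hij
      apply Set.preimage_mono
      apply Set.Icc_subset_Icc le_rfl
      have : c i ≤ c j := by
        simp only [hc]
        have : (b - a) / (j + 1 : ℚ) ≤ (b - a) / (i + 1) := by
          apply div_le_div_of_nonneg_left (by linarith) (by positivity)
          exact_mod_cast Nat.succ_le_succ hij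
        linarith
      exact_mod_cast this
    have hunion : (⋃ n : ℕ, (Subtype.val ⁻¹' Set.Icc (a : ℝ) ((c n : ℚ) : ℝ) : Set ↥I)) =
        Subtype.val ⁻¹' Set.Ico (a : ℝ) (b : ℝ) := by
      ext y
      simp only [Set.mem_iUnion, Set.mem_preimage, Set.mem_Icc, Set.mem_Ico]
      constructor
      · rintro ⟨n, h1, h2⟩
        exact ⟨h1, lt_of_le_of_lt h2 (by exact_mod_cast (hc_mem n).2)⟩
      · rintro ⟨h1, h2⟩
        have hb_sub : (0 : ℝ) < (b : ℝ) - (y : ℝ) := by linarith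
        obtain ⟨n, hn⟩ := exists_nat_gt (((b : ℝ) - (a : ℝ)) / ((b : ℝ) - (y : ℝ)))
        refine ⟨n, h1, ?_⟩
        have hcn : ((c n : ℚ) : ℝ) = (b : ℝ) - ((b : ℝ) - (a : ℝ)) / (n + 1) := by
          simp only [hc]; push_cast; ring
        rw [hcn]
        have hn1 : ((b : ℝ) - (a : ℝ)) / ((b : ℝ) - (y : ℝ)) < n + 1 := by linarith
        have hab' : (0 : ℝ) < (b : ℝ) - (a : ℝ) := by exact_mod_cast sub_pos.mpr h
        have hn2 : (b : ℝ) - (a : ℝ) < ((n : ℝ) + 1) * ((b : ℝ) - (y : ℝ)) :=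
          (div_lt_iff₀ hb_sub).mp hn1
        have : ((b : ℝ) - (a : ℝ)) / (n + 1) < (b : ℝ) - (y : ℝ) := by
          rw [div_lt_iff₀ (by positivity)]
          nlinarith
        linarith
    rw [← hunion, hc_monotone.measure_iUnion, hc_monotone.measure_iUnion]
    apply iSup_congr
    intro n
    have hcnI : ((c n : ℚ) : ℝ) ∈ I := by
      apply hab
      · exact_mod_cast (hc_mem n).1
      · exact_mod_cast (hc_mem n).2
    have := H a (c n) ha hcnI (by exact_mod_cast (hc_mem n).1)
    exact this

/-- If `m` is inner regular and agrees with `m'` on all rational compact intervals of `I`,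
then `m U ≤ m' U` for all open `U`. -/
lemma le_on_open {I : Set ℝ} (hIopen : IsOpen I) {m m' : Measure ↥I}
    (hm : IsRegularM m)
    (H : ∀ a b : ℚ, (a : ℝ) ∈ I → (b : ℝ) ∈ I → (a : ℝ) ≤ b →
      m (IccI I a b) = m' (IccI I a b))
    {U : Set ↥I} (hU : IsOpen U) : m U ≤ m' U := by
  obtain ⟨V, hVopen, rfl⟩ := isOpen_induced_iff.mp hU
  have hUmeas : MeasurableSet (Subtype.val ⁻¹' V : Set ↥I) :=
    measurableSet_preimage_val hVopen.measurableSet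
  rw [hm.2 _ hUmeas]
  refine iSup₂_le fun K hK => ?_
  obtain ⟨hKc, hKU⟩ := hK
  rcases K.eq_empty_or_nonempty with rfl | hKne
  · simp
  set K' : Set ℝ := Subtype.val '' K with hK'
  have hK'c : IsCompact K' := hKc.image continuous_subtype_val
  have hK'ne : K'.Nonempty := hKne.image _
  have hK'sub : K' ⊆ V ∩ I := by
    rintro x ⟨y, hy, rfl⟩
    exact ⟨hKU hy, y.2⟩
  obtain ⟨δ, hδ, hthick⟩ :=
    hK'c.exists_thickening_subset_open (hVopen.inter hIopen) hK'sub
  obtain ⟨q, hq0, hqδ⟩ := exists_rat_btwn hδ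
  have hq0' : (0 : ℚ) < q := by exact_mod_cast hq0
  -- grid cells
  set f : ℤ → Set ℝ := fun k => Set.Ico (((k * q : ℚ) : ℝ)) ((((k + 1) * q : ℚ) : ℝ)) with hf
  -- each cell that meets K' is inside V ∩ I
  have hcell : ∀ k : ℤ, (f k ∩ K').Nonempty → f k ⊆ V ∩ I := by
    rintro k ⟨x, hxf, hxK⟩ y hyf
    apply hthick
    rw [Metric.mem_thickening_iff]
    refine ⟨x, hxK, ?_⟩
    rw [Real.dist_eq]
    simp only [hf, Set.mem_Ico] at hxf hyf
    push_cast at hxf hyf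
    rw [abs_lt]
    constructor <;> nlinarith [hxf.1, hxf.2, hyf.1, hyf.2]
  -- the set of relevant cells is finite
  have hbdd := hK'c.isBounded
  obtain ⟨R, hR⟩ := hbdd.subset_ball 0
  set F : Set ℤ := {k | (f k ∩ K').Nonempty} with hF
  have hFfin : F.Finite := by
    apply Set.Finite.subset (Set.finite_Icc (⌈(-R) / (q : ℝ)⌉ - 1) ⌈R / (q : ℝ)⌉)
    rintro k ⟨x, hxf, hxK⟩
    have hx := hR hxK
    rw [Metric.mem_ball, Real.dist_eq, sub_zero, abs_lt] at hx
    simp only [hf, Set.mem_Ico] at hxf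
    push_cast at hxf
    constructor
    · have h1 : (-R) / (q : ℝ) < (k : ℝ) + 1 := by
        rw [div_lt_iff₀ hq0]
        nlinarith [hxf.1, hxf.2, hx.1]
      have h2 : ⌈(-R) / (q : ℝ)⌉ ≤ k + 1 := by
        rw [Int.ceil_le]
        push_cast
        linarith
      omega
    · have h1 : (k : ℝ) ≤ R / (q : ℝ) := by
        rw [le_div_iff₀ hq0]
        nlinarith [hxf.1, hxf.2, hx.2]
      have := Int.le_ceil (R / (q : ℝ))
      exact_mod_cast Int.cast_le.mp (le_trans h1 (by exact_mod_cast this)) |>.trans le_rfl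
  set s : Finset ℤ := hFfin.toFinset with hs
  -- K' is covered by the cells in s
  have hcover : K' ⊆ ⋃ k ∈ s, f k := by
    intro x hx
    set k : ℤ := ⌊x / (q : ℝ)⌋ with hk
    have hxk : x ∈ f k := by
      simp only [hf, Set.mem_Ico]
      push_cast
      constructor
      · rw [← le_div_iff₀ hq0]
        exact Int.floor_le _
      · rw [← div_lt_iff₀ hq0]
        exact Int.lt_floor_add_one _
    have hkF : k ∈ F := ⟨x, hxk, hx⟩
    exact Set.mem_biUnion (hFfin.mem_toFinset.mpr hkF) hxk
  -- cells are pairwise disjoint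
  have hdisj : (↑s : Set ℤ).PairwiseDisjoint fun k => (Subtype.val ⁻¹' f k : Set ↥I) := by
    intro i _ j _ hij
    apply Set.disjoint_left.mpr
    intro y hyi hyj
    simp only [Set.mem_preimage, hf, Set.mem_Ico] at hyi hyj
    push_cast at hyi hyj
    rcases lt_or_gt_of_ne hij with h | h
    · have : (i : ℝ) + 1 ≤ (j : ℝ) := by exact_mod_cast h
      nlinarith [hyi.1, hyi.2, hyj.1, hyj.2]
    · have : (j : ℝ) + 1 ≤ (i : ℝ) := by exact_mod_cast h
      nlinarith [hyi.1, hyi.2, hyj.1, hyj.2]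
  have hmeas : ∀ k ∈ s, MeasurableSet (Subtype.val ⁻¹' f k : Set ↥I) := fun k _ =>
    measurableSet_preimage_val measurableSet_Ico
  -- measures of each cell agree
  have hcellagree : ∀ k ∈ s, m (Subtype.val ⁻¹' f k) = m' (Subtype.val ⁻¹' f k) := by
    intro k hk
    have hkF : (f k ∩ K').Nonempty := hFfin.mem_toFinset.mp hk
    have hsub := hcell k hkF
    have hmem : ((k * q : ℚ) : ℝ) ∈ I := by
      have : ((k * q : ℚ) : ℝ) ∈ f k := by
        simp only [hf, Set.mem_Ico]
        push_cast
        constructor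
        · exact le_rfl
        · nlinarith
      exact (hsub this).2
    exact agree_Ico H (k * q) ((k + 1) * q) hmem
      (fun x hx1 hx2 => (hsub (by simp only [hf, Set.mem_Ico]; exact ⟨hx1, hx2⟩)).2)
  -- chain of inequalities
  have hKsub : K ⊆ ⋃ k ∈ s, (Subtype.val ⁻¹' f k : Set ↥I) := by
    intro y hy
    have : (y : ℝ) ∈ ⋃ k ∈ s, f k := hcover ⟨y, hy, rfl⟩
    obtain ⟨k, hk, hyk⟩ := Set.mem_iUnion₂.mp this
    exact Set.mem_biUnion hk hyk
  calc m K ≤ m (⋃ k ∈ s, (Subtype.val ⁻¹' f k : Set ↥I)) := measure_mono hKsub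
    _ = ∑ k ∈ s, m (Subtype.val ⁻¹' f k) := measure_biUnion_finset hdisj hmeas
    _ = ∑ k ∈ s, m' (Subtype.val ⁻¹' f k) := Finset.sum_congr rfl hcellagree
    _ = m' (⋃ k ∈ s, (Subtype.val ⁻¹' f k : Set ↥I)) := (measure_biUnion_finset hdisj hmeas).symm
    _ ≤ m' (Subtype.val ⁻¹' V) := by
        apply measure_mono
        apply Set.iUnion₂_subset
        intro k hk
        have hkF : (f k ∩ K').Nonempty := hFfin.mem_toFinset.mp hk
        exact fun y hy => (hcell k hkF hy).1

/-- Regular measures agreeing on all rational compact intervals are equal. -/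
lemma eq_of_agree_Icc {I : Set ℝ} (hIopen : IsOpen I) {m m' : Measure ↥I}
    (hm : IsRegularM m) (hm' : IsRegularM m')
    (H : ∀ a b : ℚ, (a : ℝ) ∈ I → (b : ℝ) ∈ I → (a : ℝ) ≤ b →
      m (IccI I a b) = m' (IccI I a b)) : m = m' := by
  have hopen : ∀ U : Set ↥I, IsOpen U → m U = m' U := fun U hU =>
    le_antisymm (le_on_open hIopen hm H hU)
      (le_on_open hIopen hm' (fun a b ha hb hab => (H a b ha hb hab).symm) hU)
  ext A hA
  rw [hm.1 A hA, hm'.1 A hA]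
  exact iInf_congr fun U => iInf_congr fun h => hopen U h.1

/-- The separation lemma: if `m(IccI a b) < m'(IccI a b)` and `m` is outer regular,
then `m` and `m'` can be separated by disjoint ϑ-open sets. -/
lemma sep_lemma {I : Set ℝ} (hIopen : IsOpen I) (hIconn : I.OrdConnected)
    {m m' : Measure ↥I} (hm : IsRegularM m) (a b : ℚ)
    (ha : (a : ℝ) ∈ I) (hb : (b : ℝ) ∈ I) (hab : (a : ℝ) ≤ b)
    (hlt : m (IccI I a b) < m' (IccI I a b)) :
    ∃ u v : Set (Measure ↥I), IsOpen u ∧ IsOpen v ∧ m ∈ u ∧ m' ∈ v ∧ Disjoint u v := by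
  obtain ⟨c, hc1, hc2⟩ := exists_between hlt
  have hmeas : MeasurableSet (IccI I a b) := by
    rw [IccI_eq_preimage]
    exact measurableSet_preimage_val measurableSet_Icc
  rw [hm.1 _ hmeas] at hc1
  rw [iInf_lt_iff] at hc1
  obtain ⟨U, hU⟩ := hc1
  rw [iInf_lt_iff] at hU
  obtain ⟨⟨hUopen, hUsub⟩, hUc⟩ := hU
  obtain ⟨V, hVopen, rfl⟩ := isOpen_induced_iff.mp hUopen
  -- real Icc a b is inside V ∩ I
  have hIccI : Set.Icc (a : ℝ) (b : ℝ) ⊆ V ∩ I := by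
    intro x hx
    have hxI : x ∈ I := hIconn.out ha hb hx
    exact ⟨hUsub (show (⟨x, hxI⟩ : ↥I) ∈ IccI I a b from hx), hxI⟩
  obtain ⟨δ, hδ, hthick⟩ :=
    isCompact_Icc.exists_thickening_subset_open (hVopen.inter hIopen) hIccI
  obtain ⟨a', ha'1, ha'2⟩ := exists_rat_btwn (show (a : ℝ) - δ < a by linarith)
  obtain ⟨b', hb'1, hb'2⟩ := exists_rat_btwn (show (b : ℝ) < b + δ by linarith)
  have ha'b' : (a' : ℝ) ≤ b' := by linarith
  have hIcc' : Set.Icc ((a' : ℚ) : ℝ) ((b' : ℚ) : ℝ) ⊆ V ∩ I := by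
    intro y hy
    apply hthick
    rw [Metric.mem_thickening_iff]
    refine ⟨max (a : ℝ) (min y (b : ℝ)), ?_, ?_⟩
    · constructor
      · exact le_max_left _ _
      · exact max_le hab (min_le_right _ _)
    · rw [Real.dist_eq, abs_lt]
      rcases le_total y (a : ℝ) with h1 | h1
      · rw [min_eq_left (le_trans h1 hab), max_eq_left h1]
        constructor <;> [linarith [hy.1]; linarith]
      · rw [max_eq_right]
        · rcases le_total y (b : ℝ) with h2 | h2
          · rw [min_eq_left h2]; constructor <;> linarith
          · rw [min_eq_right h2]; constructor <;> [linarith; linarith [hy.2]]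
        · exact le_min h1 hab
  have ha'I : ((a' : ℚ) : ℝ) ∈ I := (hIcc' ⟨le_rfl, by exact_mod_cast ha'b'⟩).2
  have hb'I : ((b' : ℚ) : ℝ) ∈ I := (hIcc' ⟨by exact_mod_cast ha'b', le_rfl⟩).2
  refine ⟨{μ : Measure ↥I | μ (IccI I a' b') < c}, {μ : Measure ↥I | c < μ (IooI I a' b')},
    ?_, ?_, ?_, ?_, ?_⟩
  · exact TopologicalSpace.isOpen_generateFrom_of_mem
      (Or.inr ⟨a', b', c, ha'I, hb'I, by exact_mod_cast ha'b', rfl⟩)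
  · exact TopologicalSpace.isOpen_generateFrom_of_mem
      (Or.inl ⟨a', b', c, ha'I, hb'I, by linarith, rfl⟩)
  · -- m(IccI a' b') ≤ m U < c
    show m (IccI I a' b') < c
    calc m (IccI I a' b') ≤ m (Subtype.val ⁻¹' V) := by
          apply measure_mono
          intro y hy
          exact (hIcc' hy).1
      _ < c := hUc
  · -- c < m'(IccI a b) ≤ m'(IooI a' b')
    show c < m' (IooI I a' b')
    apply lt_of_lt_of_le hc2
    apply measure_mono
    intro y hy
    exact ⟨lt_of_lt_of_le ha'2 hy.1, lt_of_le_of_lt hy.2 hb'1⟩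
  · apply Set.disjoint_left.mpr
    intro μ hμ1 hμ2
    have h1 : μ (IooI I a' b') ≤ μ (IccI I a' b') := by
      apply measure_mono
      intro y hy
      exact ⟨hy.1.le, hy.2.le⟩
    exact absurd (lt_of_le_of_lt h1 hμ1) (not_lt.mpr hμ2.le)

/-- `(M(I), ϑ)` is Hausdorff. -/
theorem stmt_4 (I : Set ℝ) (hIopen : IsOpen I) (hIconn : I.OrdConnected) :
    T2Space (MSpace I) := by
  constructor
  intro x y hxy
  have hne : x.1 ≠ y.1 := fun h => hxy (Subtype.ext h)
  have hdiff : ∃ a b : ℚ, (a : ℝ) ∈ I ∧ (b : ℝ) ∈ I ∧ (a : ℝ) ≤ b ∧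
      x.1 (IccI I a b) ≠ y.1 (IccI I a b) := by
    by_contra h
    push_neg at h
    exact hne (eq_of_agree_Icc hIopen x.2 y.2 fun a b ha hb hab => h a b ha hb hab)
  obtain ⟨a, b, ha, hb, hab, hneq⟩ := hdiff
  rcases lt_or_gt_of_ne hneq with h | h
  · obtain ⟨u, v, hu, hv, hxu, hyv, huv⟩ := sep_lemma hIopen hIconn x.2 a b ha hb hab h
    exact ⟨Subtype.val ⁻¹' u, Subtype.val ⁻¹' v, hu.preimage continuous_subtype_val,
      hv.preimage continuous_subtype_val, hxu, hyv, huv.preimage _⟩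
  · obtain ⟨u, v, hu, hv, hyu, hxv, huv⟩ := sep_lemma hIopen hIconn y.2 a b ha hb hab h
    exact ⟨Subtype.val ⁻¹' v, Subtype.val ⁻¹' u, hv.preimage continuous_subtype_val,
      hu.preimage continuous_subtype_val, hxv, hyu, (huv.symm).preimage _⟩
end
end

section
/- The topological space (M(I), ϑ) of regular nonnegative [0,∞]-valued measures on an open interval I, with the topology generated by lower semicontinuity of m ↦ m((a,b)) and upper semicontinuity of m ↦ m([a,b]) over rational endpoints, is a regular topological space (T3). -/
open MeasureTheory Set ENNReal Topology Filter TopologicalSpace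

noncomputable section

namespace Stmt5Aux

/-- The generating set of `ϑ`. -/
def genSet (I : Set ℝ) : Set (Set (Measure ↥I)) :=
  ({U | ∃ (a b : ℚ) (c : ℝ≥0∞), (a : ℝ) ∈ I ∧ (b : ℝ) ∈ I ∧ (a : ℝ) < b ∧
      U = {m : Measure ↥I | c < m (IooI I a b)}} ∪
   {U | ∃ (a b : ℚ) (d : ℝ≥0∞), (a : ℝ) ∈ I ∧ (b : ℝ) ∈ I ∧ (a : ℝ) ≤ b ∧
      U = {m : Measure ↥I | m (IccI I a b) < d}})

lemma thetaTop_eq (I : Set ℝ) : thetaTop I = TopologicalSpace.generateFrom (genSet I) := rfl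

variable {I : Set ℝ}

lemma IooI_eq (a b : ℝ) : IooI I a b = (Subtype.val : ↥I → ℝ) ⁻¹' (Set.Ioo a b) := rfl

lemma IccI_eq (a b : ℝ) : IccI I a b = (Subtype.val : ↥I → ℝ) ⁻¹' (Set.Icc a b) := rfl

lemma measurable_IooI (a b : ℝ) : MeasurableSet (IooI I a b) := by
  rw [IooI_eq]; exact measurableSet_Ioo.preimage measurable_subtype_coe

lemma measurable_IccI (a b : ℝ) : MeasurableSet (IccI I a b) := by
  rw [IccI_eq]; exact measurableSet_Icc.preimage measurable_subtype_coe

lemma isOpen_IooI (a b : ℝ) : IsOpen (IooI I a b) := by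
  rw [IooI_eq]; exact isOpen_Ioo.preimage continuous_subtype_val

lemma IooI_subset_IccI (a b : ℝ) : IooI I a b ⊆ IccI I a b :=
  fun _ h => ⟨le_of_lt h.1, le_of_lt h.2⟩

lemma IooI_inter (p q p' q' : ℚ) :
    IooI I p q ∩ IooI I p' q' = IooI I (max p p' : ℚ) (min q q' : ℚ) := by
  ext y
  simp only [IooI, Set.mem_inter_iff, Set.mem_setOf_eq, Rat.cast_max, Rat.cast_min,
    max_lt_iff, lt_min_iff, sup_lt_iff, lt_inf_iff]
  tauto

lemma genSet_preimage_open (I : Set ℝ) {g : Set (Measure ↥I)} (hg : g ∈ genSet I) :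
    IsOpen ((Subtype.val : MSpace I → Measure ↥I) ⁻¹' g) := by
  have : IsOpen g := TopologicalSpace.GenerateOpen.basic g hg
  exact this.preimage continuous_subtype_val

/-- Key inclusion–exclusion induction: two measures agreeing on all rational intervals of `I`
agree on finite unions of such intervals. -/
lemma biUnion_eq (m₁ m₂ : Measure ↥I)
    (h : ∀ p q : ℚ, (p : ℝ) ∈ I → (q : ℝ) ∈ I → m₁ (IooI I p q) = m₂ (IooI I p q)) :
    ∀ n : ℕ, ∀ L : List (ℚ × ℚ), L.length ≤ n →
      (∀ r ∈ L, ((r.1 : ℝ) ∈ I ∧ (r.2 : ℝ) ∈ I)) →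
      m₁ (⋃ r ∈ L, IooI I r.1 r.2) = m₂ (⋃ r ∈ L, IooI I r.1 r.2) := by
  intro n
  induction n with
  | zero =>
    intro L hL _
    have : L = [] := List.eq_nil_of_length_eq_zero (Nat.le_zero.mp hL)
    subst this; simp
  | succ n ih =>
    intro L hL hmem
    match L with
    | [] => simp
    | r :: L' =>
      have hlen : L'.length ≤ n := by
        simpa using Nat.lt_succ_iff.mp (Nat.lt_of_lt_of_le (by simp) hL)
      set B := IooI I (r.1 : ℝ) (r.2 : ℝ) with hBdef
      set A := ⋃ y ∈ L', IooI I (y.1 : ℝ) (y.2 : ℝ) with hAdef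
      have hAm : MeasurableSet A :=
        MeasurableSet.biUnion (List.finite_toSet L').countable
          (fun y _ => measurable_IooI _ _)
      have hr : ((r.1 : ℝ) ∈ I ∧ (r.2 : ℝ) ∈ I) := hmem r List.mem_cons_self
      have hmem' : ∀ y ∈ L', ((y.1 : ℝ) ∈ I ∧ (y.2 : ℝ) ∈ I) :=
        fun y hy => hmem y (List.mem_cons_of_mem _ hy)
      have hcons : (⋃ y ∈ (r :: L'), IooI I (y.1 : ℝ) (y.2 : ℝ)) = B ∪ A := by
        ext z
        simp only [Set.mem_iUnion, exists_prop, List.mem_cons, Set.mem_union, hBdef, hAdef]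
        constructor
        · rintro ⟨y, (rfl | hy), hz⟩
          · exact Or.inl hz
          · exact Or.inr ⟨y, hy, hz⟩
        · rintro (hz | ⟨y, hy, hz⟩)
          · exact ⟨r, Or.inl rfl, hz⟩
          · exact ⟨y, Or.inr hy, hz⟩
      set g : ℚ × ℚ → ℚ × ℚ := fun y => (max r.1 y.1, min r.2 y.2) with hgdef
      have hBA : B ∩ A = ⋃ y ∈ L'.map g, IooI I (y.1 : ℝ) (y.2 : ℝ) := by
        rw [hAdef, Set.inter_iUnion₂]
        ext z
        simp only [Set.mem_iUnion, exists_prop, List.mem_map]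
        constructor
        · rintro ⟨y, hy, hz⟩
          refine ⟨g y, ⟨y, hy, rfl⟩, ?_⟩
          have := (IooI_inter (I := I) r.1 r.2 y.1 y.2)
          rw [← this]
          exact hz
        · rintro ⟨y, ⟨w, hw, rfl⟩, hz⟩
          refine ⟨w, hw, ?_⟩
          have := (IooI_inter (I := I) r.1 r.2 w.1 w.2)
          rw [← this] at hz
          exact hz
      have hgI : ∀ y ∈ L'.map g, ((y.1 : ℝ) ∈ I ∧ (y.2 : ℝ) ∈ I) := by
        intro y hy
        rw [List.mem_map] at hy
        obtain ⟨w, hw, rfl⟩ := hy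
        obtain ⟨hw1, hw2⟩ := hmem' w hw
        constructor
        · rcases max_choice r.1 w.1 with hmx | hmx <;> simp [hgdef, hmx, hr.1, hw1]
        · rcases min_choice r.2 w.2 with hmn | hmn <;> simp [hgdef, hmn, hr.2, hw2]
      have hIH_A : m₁ A = m₂ A := ih L' hlen hmem'
      have hIH_BA : m₁ (B ∩ A) = m₂ (B ∩ A) := by
        rw [hBA]
        exact ih (L'.map g) (by simpa using hlen) hgI
      have hB : m₁ B = m₂ B := h r.1 r.2 hr.1 hr.2
      have key₁ := measure_union_add_inter (μ := m₁) B hAm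
      have key₂ := measure_union_add_inter (μ := m₂) B hAm
      rw [hcons]
      by_cases hk : m₁ (B ∩ A) = ∞
      · have e1 : m₁ (B ∪ A) = ∞ :=
          top_le_iff.mp (hk ▸ measure_mono (Set.inter_subset_left.trans Set.subset_union_left))
        have hk2 : m₂ (B ∩ A) = ∞ := hIH_BA ▸ hk
        have e2 : m₂ (B ∪ A) = ∞ :=
          top_le_iff.mp (hk2 ▸ measure_mono (Set.inter_subset_left.trans Set.subset_union_left))
        rw [e1, e2]
      · refine WithTop.add_right_cancel hk ?_
        calc m₁ (B ∪ A) + m₁ (B ∩ A) = m₁ B + m₁ A := key₁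
          _ = m₂ B + m₂ A := by rw [hB, hIH_A]
          _ = m₂ (B ∪ A) + m₂ (B ∩ A) := key₂.symm
          _ = m₂ (B ∪ A) + m₁ (B ∩ A) := by rw [hIH_BA]

/-- Every compact subset of an open set of `↥I` can be sandwiched by a finite union of
rational intervals with endpoints in `I`. -/
lemma exists_cover (hIopen : IsOpen I) {O : Set ↥I} (hO : IsOpen O) {K : Set ↥I}
    (hK : IsCompact K) (hKO : K ⊆ O) :
    ∃ L : List (ℚ × ℚ), (∀ r ∈ L, ((r.1 : ℝ) ∈ I ∧ (r.2 : ℝ) ∈ I)) ∧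
      K ⊆ (⋃ r ∈ L, IooI I r.1 r.2) ∧ (⋃ r ∈ L, IooI I r.1 r.2) ⊆ O := by
  obtain ⟨V, hV, hVO⟩ := isOpen_induced_iff.mp hO
  have key : ∀ x : ↥I, x ∈ K → ∃ s : ℚ × ℚ, ((s.1 : ℝ) ∈ I ∧ (s.2 : ℝ) ∈ I) ∧
      x ∈ IooI I s.1 s.2 ∧ IooI I s.1 s.2 ⊆ O := by
    intro x hx
    have hxI : (x : ℝ) ∈ I := x.2
    have hxV : (x : ℝ) ∈ V := by
      have : x ∈ O := hKO hx
      rw [← hVO] at this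
      exact this
    obtain ⟨ε, hε, hball⟩ := Metric.isOpen_iff.mp (hV.inter hIopen) (x : ℝ) ⟨hxV, hxI⟩
    obtain ⟨p, hp1, hp2⟩ := exists_rat_btwn (show (x : ℝ) - ε < x by linarith)
    obtain ⟨q, hq1, hq2⟩ := exists_rat_btwn (show (x : ℝ) < x + ε by linarith)
    have hpb : (p : ℝ) ∈ Metric.ball (x : ℝ) ε := by
      rw [Metric.mem_ball, Real.dist_eq, abs_lt]; constructor <;> linarith
    have hqb : (q : ℝ) ∈ Metric.ball (x : ℝ) ε := by
      rw [Metric.mem_ball, Real.dist_eq, abs_lt]; constructor <;> linarith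
    refine ⟨(p, q), ⟨(hball hpb).2, (hball hqb).2⟩, ⟨hp2, hq1⟩, ?_⟩
    intro y hy
    have hyb : (y : ℝ) ∈ Metric.ball (x : ℝ) ε := by
      rw [Metric.mem_ball, Real.dist_eq, abs_lt]
      obtain ⟨h1, h2⟩ := hy
      constructor <;> linarith
    rw [← hVO]
    exact (hball hyb).1
  choose s hs1 hs2 hs3 using key
  obtain ⟨t, ht⟩ := hK.elim_finite_subcover
    (fun i : {x : ↥I // x ∈ K} => IooI I ((s i.1 i.2).1 : ℝ) ((s i.1 i.2).2 : ℝ))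
    (fun i => isOpen_IooI _ _)
    (fun x hx => Set.mem_iUnion.mpr ⟨⟨x, hx⟩, hs2 x hx⟩)
  refine ⟨t.toList.map (fun i => s i.1 i.2), ?_, ?_, ?_⟩
  · intro r hr
    rw [List.mem_map] at hr
    obtain ⟨i, _, rfl⟩ := hr
    exact hs1 i.1 i.2
  · intro x hx
    obtain ⟨i, hit, hxi⟩ := Set.mem_iUnion₂.mp (ht hx)
    exact Set.mem_iUnion₂.mpr ⟨s i.1 i.2, List.mem_map.mpr ⟨i, Finset.mem_toList.mpr hit, rfl⟩, hxi⟩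
  · intro x hx
    obtain ⟨rr, hrr, hxr⟩ := Set.mem_iUnion₂.mp hx
    rw [List.mem_map] at hrr
    obtain ⟨i, _, rfl⟩ := hrr
    exact hs3 i.1 i.2 hxr

lemma open_eq (hIopen : IsOpen I) {m₁ m₂ : Measure ↥I} (hm₁ : IsRegularM m₁)
    (hm₂ : IsRegularM m₂)
    (h : ∀ p q : ℚ, (p : ℝ) ∈ I → (q : ℝ) ∈ I → m₁ (IooI I p q) = m₂ (IooI I p q))
    {O : Set ↥I} (hO : IsOpen O) : m₁ O = m₂ O := by
  have hle : ∀ (μ ν : Measure ↥I), IsRegularM μ →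
      (∀ p q : ℚ, (p : ℝ) ∈ I → (q : ℝ) ∈ I → μ (IooI I p q) = ν (IooI I p q)) →
      μ O ≤ ν O := by
    intro μ ν hμ hμν
    rw [hμ.2 O hO.measurableSet]
    refine iSup₂_le fun K hK => ?_
    obtain ⟨L, hLI, hKL, hLO⟩ := exists_cover hIopen hO hK.1 hK.2
    calc μ K ≤ μ (⋃ r ∈ L, IooI I r.1 r.2) := measure_mono hKL
      _ = ν (⋃ r ∈ L, IooI I r.1 r.2) := biUnion_eq μ ν hμν L.length L le_rfl hLI
      _ ≤ ν O := measure_mono hLO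
  exact le_antisymm (hle m₁ m₂ hm₁ h) (hle m₂ m₁ hm₂ (fun p q hp hq => (h p q hp hq).symm))

lemma meas_eq (hIopen : IsOpen I) {m₁ m₂ : Measure ↥I} (hm₁ : IsRegularM m₁)
    (hm₂ : IsRegularM m₂)
    (h : ∀ p q : ℚ, (p : ℝ) ∈ I → (q : ℝ) ∈ I → m₁ (IooI I p q) = m₂ (IooI I p q)) :
    m₁ = m₂ := by
  refine Measure.ext fun A hA => ?_
  rw [hm₁.1 A hA, hm₂.1 A hA]
  exact iInf_congr fun U => iInf_congr fun hU => open_eq hIopen hm₁ hm₂ h hU.1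

/-- Each subbasic open set containing `x` contains a closed neighborhood of `x`. -/
lemma subbasic_closed_nbhd (hIopen : IsOpen I) (hIconn : I.OrdConnected) (x : MSpace I)
    {g : Set (Measure ↥I)} (hg : g ∈ genSet I) (hxg : x.1 ∈ g) :
    ∃ t : Set (MSpace I), t ∈ 𝓝 x ∧ IsClosed t ∧
      t ⊆ (Subtype.val : MSpace I → Measure ↥I) ⁻¹' g := by
  rcases hg with ⟨a, b, c, haI, hbI, hab, rfl⟩ | ⟨a, b, d, haI, hbI, hab, rfl⟩
  · -- lower (Ioo) case
    have hxc : c < x.1 (IooI I a b) := hxg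
    obtain ⟨c', hcc', hc'⟩ := exists_between hxc
    rw [x.2.2 (IooI I a b) (measurable_IooI _ _), lt_iSup_iff] at hc'
    obtain ⟨K, hc'⟩ := hc'
    rw [lt_iSup_iff] at hc'
    obtain ⟨⟨hKcomp, hKsub⟩, hc'K⟩ := hc'
    have hKne : K.Nonempty := by
      rcases K.eq_empty_or_nonempty with rfl | hne
      · rw [measure_empty] at hc'K
        exact absurd hc'K ENNReal.not_lt_zero
      · exact hne
    set S := (Subtype.val : ↥I → ℝ) '' K with hSdef
    have hScomp : IsCompact S := hKcomp.image continuous_subtype_val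
    have hSne : S.Nonempty := hKne.image _
    have hbddB : BddBelow S := hScomp.bddBelow
    have hbddA : BddAbove S := hScomp.bddAbove
    obtain ⟨y₁, hy₁K, hy₁⟩ := hScomp.sInf_mem hSne
    obtain ⟨y₂, hy₂K, hy₂⟩ := hScomp.sSup_mem hSne
    have haInf : (a : ℝ) < sInf S := hy₁ ▸ (hKsub hy₁K).1
    have hSupb : sSup S < (b : ℝ) := hy₂ ▸ (hKsub hy₂K).2
    obtain ⟨p, hap, hpInf⟩ := exists_rat_btwn haInf
    obtain ⟨q, hSupq, hqb⟩ := exists_rat_btwn hSupb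
    have hIS : sInf S ≤ sSup S := csInf_le_csSup hSne hbddB hbddA
    have hpb : (p : ℝ) < b := lt_trans (lt_of_lt_of_le hpInf (hIS.trans hSupq.le)) hqb
    have haq : (a : ℝ) < q := lt_trans hap (lt_of_le_of_lt (hpInf.le.trans hIS) hSupq)
    have hpq : (p : ℝ) < q := lt_of_lt_of_le hpInf (hIS.trans hSupq.le)
    have hpI : (p : ℝ) ∈ I := hIconn.out haI hbI ⟨hap.le, hpb.le⟩
    have hqI : (q : ℝ) ∈ I := hIconn.out haI hbI ⟨haq.le, hqb.le⟩
    have hKpq : K ⊆ IooI I p q := by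
      intro y hy
      constructor
      · exact hpInf.trans_le (csInf_le hbddB (Set.mem_image_of_mem _ hy))
      · exact (le_csSup hbddA (Set.mem_image_of_mem _ hy)).trans_lt hSupq
    refine ⟨{m' : MSpace I | c' ≤ m'.1 (IccI I p q)}, ?_, ?_, ?_⟩
    · have hVopen : IsOpen ((Subtype.val : MSpace I → Measure ↥I) ⁻¹'
          {m : Measure ↥I | c' < m (IooI I p q)}) :=
        genSet_preimage_open I (Or.inl ⟨p, q, c', hpI, hqI, hpq, rfl⟩)
      have hxV : x ∈ (Subtype.val : MSpace I → Measure ↥I) ⁻¹'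
          {m : Measure ↥I | c' < m (IooI I p q)} :=
        lt_of_lt_of_le hc'K (measure_mono hKpq)
      refine Filter.mem_of_superset (hVopen.mem_nhds hxV) ?_
      intro m' hm'
      exact le_of_lt (lt_of_lt_of_le hm' (measure_mono (IooI_subset_IccI _ _)))
    · have : {m' : MSpace I | c' ≤ m'.1 (IccI I p q)} =
          ((Subtype.val : MSpace I → Measure ↥I) ⁻¹'
            {m : Measure ↥I | m (IccI I p q) < c'})ᶜ := by
        ext m'; simp [not_lt]
      rw [this]
      exact (genSet_preimage_open I (Or.inr ⟨p, q, c', hpI, hqI, hpq.le, rfl⟩)).isClosed_compl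
    · intro m' hm'
      show c < m'.1 (IooI I a b)
      calc c < c' := hcc'
        _ ≤ m'.1 (IccI I p q) := hm'
        _ ≤ m'.1 (IooI I a b) :=
            measure_mono (fun y hy => ⟨hap.trans_le hy.1, hy.2.trans_lt hqb⟩)
  · -- upper (Icc) case
    have hxd : x.1 (IccI I a b) < d := hxg
    obtain ⟨d', hd'1, hd'2⟩ := exists_between hxd
    rw [x.2.1 (IccI I a b) (measurable_IccI _ _), iInf_lt_iff] at hd'1
    obtain ⟨O, hd'1⟩ := hd'1
    rw [iInf_lt_iff] at hd'1
    obtain ⟨⟨hOopen, hOsub⟩, hOd'⟩ := hd'1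
    obtain ⟨W, hW, hWO⟩ := isOpen_induced_iff.mp hOopen
    have hab_sub : Set.Icc (a : ℝ) (b : ℝ) ⊆ I := hIconn.out haI hbI
    have hIccW : Set.Icc (a : ℝ) (b : ℝ) ⊆ W := by
      intro y hy
      have h1 : (⟨y, hab_sub hy⟩ : ↥I) ∈ IccI I a b := ⟨hy.1, hy.2⟩
      have h2 := hOsub h1
      rw [← hWO] at h2
      exact h2
    obtain ⟨ε, hε, hthick⟩ := isCompact_Icc.exists_thickening_subset_open hW hIccW
    obtain ⟨ηa, hηa, hballa⟩ := Metric.isOpen_iff.mp hIopen (a : ℝ) haI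
    obtain ⟨ηb, hηb, hballb⟩ := Metric.isOpen_iff.mp hIopen (b : ℝ) hbI
    obtain ⟨p, hp1, hp2⟩ := exists_rat_btwn
      (show (a : ℝ) - min ε ηa < a by have := lt_min hε hηa; linarith)
    obtain ⟨q, hq1, hq2⟩ := exists_rat_btwn
      (show (b : ℝ) < b + min ε ηb by have := lt_min hε hηb; linarith)
    have hminεa := min_le_left ε ηa
    have hminηa := min_le_right ε ηa
    have hminεb := min_le_left ε ηb
    have hminηb := min_le_right ε ηb
    have hpI : (p : ℝ) ∈ I := by
      apply hballa
      rw [Metric.mem_ball, Real.dist_eq, abs_lt]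
      constructor <;> linarith
    have hqI : (q : ℝ) ∈ I := by
      apply hballb
      rw [Metric.mem_ball, Real.dist_eq, abs_lt]
      constructor <;> linarith
    have hsubW : ∀ y : ℝ, (p : ℝ) ≤ y → y ≤ (q : ℝ) → y ∈ W := by
      intro y h1 h2
      apply hthick
      rw [Metric.mem_thickening_iff]
      rcases lt_or_ge y (a : ℝ) with hya | hay
      · exact ⟨(a : ℝ), ⟨le_refl _, hab⟩,
          by rw [Real.dist_eq, abs_lt]; constructor <;> linarith⟩
      rcases le_or_gt y (b : ℝ) with hyb | hby
      · exact ⟨y, ⟨hay, hyb⟩, by simpa using hε⟩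
      · exact ⟨(b : ℝ), ⟨hab, le_refl _⟩,
          by rw [Real.dist_eq, abs_lt]; constructor <;> linarith⟩
    have hpqO : IccI I p q ⊆ O := by
      intro y hy
      rw [← hWO]
      exact hsubW _ hy.1 hy.2
    have hpa : (p : ℝ) < a := hp2
    have hbq : (b : ℝ) < q := hq1
    have hpq : (p : ℝ) < q := lt_trans (lt_of_lt_of_le hpa hab) hbq
    refine ⟨{m' : MSpace I | m'.1 (IooI I p q) ≤ d'}, ?_, ?_, ?_⟩
    · have hVopen : IsOpen ((Subtype.val : MSpace I → Measure ↥I) ⁻¹'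
          {m : Measure ↥I | m (IccI I p q) < d'}) :=
        genSet_preimage_open I (Or.inr ⟨p, q, d', hpI, hqI, hpq.le, rfl⟩)
      have hxV : x ∈ (Subtype.val : MSpace I → Measure ↥I) ⁻¹'
          {m : Measure ↥I | m (IccI I p q) < d'} :=
        lt_of_le_of_lt (measure_mono hpqO) hOd'
      refine Filter.mem_of_superset (hVopen.mem_nhds hxV) ?_
      intro m' hm'
      exact le_of_lt (lt_of_le_of_lt (measure_mono (IooI_subset_IccI _ _)) hm')
    · have : {m' : MSpace I | m'.1 (IooI I p q) ≤ d'} =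
          ((Subtype.val : MSpace I → Measure ↥I) ⁻¹'
            {m : Measure ↥I | d' < m (IooI I p q)})ᶜ := by
        ext m'; simp [not_lt]
      rw [this]
      exact (genSet_preimage_open I (Or.inl ⟨p, q, d', hpI, hqI, hpq, rfl⟩)).isClosed_compl
    · intro m' hm'
      show m'.1 (IccI I a b) < d
      calc m'.1 (IccI I a b) ≤ m'.1 (IooI I p q) :=
            measure_mono (fun y hy => ⟨hpa.trans_le hy.1, hy.2.trans_lt hbq⟩)
        _ ≤ d' := hm'
        _ < d := hd'2

lemma mspace_top_eq (I : Set ℝ) :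
    (instTopologicalSpaceSubtype : TopologicalSpace (MSpace I)) =
      TopologicalSpace.generateFrom
        ((fun u => (Subtype.val : MSpace I → Measure ↥I) ⁻¹' u) '' genSet I) := by
  rw [← induced_generateFrom_eq]
  rfl

end Stmt5Aux

open Stmt5Aux in
/-- `(M(I), ϑ)` is a regular (T3) topological space. -/
theorem stmt_5 (I : Set ℝ) (hIopen : IsOpen I) (hIconn : I.OrdConnected) :
    T3Space (MSpace I) := by
  have hT0 : T0Space (MSpace I) := by
    refine ⟨fun {x y} hxy => ?_⟩
    refine Subtype.ext (meas_eq hIopen x.2 y.2 ?_)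
    intro p q hp hq
    rcases le_or_gt (q : ℝ) (p : ℝ) with hqp | hpq
    · have : IooI I (p : ℝ) (q : ℝ) = ∅ := by
        ext z
        simp only [IooI, Set.mem_setOf_eq, Set.mem_empty_iff_false, iff_false, not_and, not_lt]
        intro h1
        linarith
      rw [this]
      simp
    · by_contra hne
      rcases lt_or_gt_of_ne hne with hlt | hlt
      · have hgopen := genSet_preimage_open I
          (Or.inl ⟨p, q, x.1 (IooI I p q), hp, hq, hpq, rfl⟩)
        have hy : y ∈ (Subtype.val : MSpace I → Measure ↥I) ⁻¹'
            {m : Measure ↥I | x.1 (IooI I p q) < m (IooI I p q)} := hlt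
        have hx := (hxy.mem_open_iff hgopen).mpr hy
        exact lt_irrefl _ (show x.1 (IooI I (p:ℝ) (q:ℝ)) < x.1 (IooI I (p:ℝ) (q:ℝ)) from hx)
      · have hgopen := genSet_preimage_open I
          (Or.inl ⟨p, q, y.1 (IooI I p q), hp, hq, hpq, rfl⟩)
        have hx : x ∈ (Subtype.val : MSpace I → Measure ↥I) ⁻¹'
            {m : Measure ↥I | y.1 (IooI I p q) < m (IooI I p q)} := hlt
        have hy := (hxy.mem_open_iff hgopen).mp hx
        exact lt_irrefl _ (show y.1 (IooI I (p:ℝ) (q:ℝ)) < y.1 (IooI I (p:ℝ) (q:ℝ)) from hy)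
  have hreg : RegularSpace (MSpace I) := by
    apply RegularSpace.of_exists_mem_nhds_isClosed_subset
    intro x s hs
    have hbasis := TopologicalSpace.isTopologicalBasis_of_subbasis (mspace_top_eq I)
    rw [hbasis.mem_nhds_iff] at hs
    obtain ⟨u, ⟨f, ⟨hfin, hfsub⟩, rfl⟩, hxu, hus⟩ := hs
    have key : ∀ v : Set (MSpace I), ∃ t, t ∈ 𝓝 x ∧ IsClosed t ∧ (v ∈ f → t ⊆ v) := by
      intro v
      by_cases hv : v ∈ f
      · obtain ⟨g, hg, rfl⟩ := hfsub hv
        obtain ⟨t, h1, h2, h3⟩ := subbasic_closed_nbhd hIopen hIconn x hg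
          (Set.mem_sInter.mp hxu _ hv)
        exact ⟨t, h1, h2, fun _ => h3⟩
      · exact ⟨Set.univ, Filter.univ_mem, isClosed_univ, fun h => absurd h hv⟩
    choose t ht1 ht2 ht3 using key
    refine ⟨⋂ v ∈ f, t v, ?_, ?_, ?_⟩
    · exact (Filter.biInter_mem hfin).mpr fun v _ => ht1 v
    · exact isClosed_biInter fun v _ => ht2 v
    · refine Set.Subset.trans ?_ hus
      intro z hz
      rw [Set.mem_sInter]
      intro v hv
      exact ht3 v hv (Set.mem_iInter₂.mp hz v hv)
  exact @T3Space.mk _ _ hT0 hreg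
end
end

section
/- A sequence (mₙ) in M(I) converges to m in the topology ϑ if and only if: (i) for every open set O with O ∩ e(m) ≠ ∅, mₙ(O) → ∞; and (ii) for every continuous nonnegative function φ with compact support contained in I \ e(m), ∫ φ dmₙ → ∫ φ dm. -/
open MeasureTheory Set ENNReal Topology Filter TopologicalSpace

noncomputable section

namespace Stmt7Aux

variable {I : Set ℝ}

/-! ### Interval lemmas -/

lemma iooI_eq (a b : ℝ) : IooI I a b = Subtype.val ⁻¹' (Set.Ioo a b) := rfl
lemma iccI_eq (a b : ℝ) : IccI I a b = Subtype.val ⁻¹' (Set.Icc a b) := rfl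

lemma isOpen_iooI (a b : ℝ) : IsOpen (IooI I a b) :=
  isOpen_Ioo.preimage continuous_subtype_val

lemma measurableSet_iooI (a b : ℝ) : MeasurableSet (IooI I a b) :=
  measurable_subtype_coe measurableSet_Ioo

lemma measurableSet_iccI (a b : ℝ) : MeasurableSet (IccI I a b) :=
  measurable_subtype_coe measurableSet_Icc

lemma isCompact_iccI (hIconn : I.OrdConnected) {a b : ℝ} (ha : a ∈ I) (hb : b ∈ I) :
    IsCompact (IccI I a b) := by
  rw [Topology.IsEmbedding.subtypeVal.isCompact_iff]
  have : Subtype.val '' (IccI I a b) = Set.Icc a b := by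
    rw [iccI_eq, Subtype.image_preimage_coe]
    exact inter_eq_right.mpr (hIconn.out ha hb)
  rw [this]; exact isCompact_Icc

/-! ### Explosion set lemmas -/

lemma ball_eq (x : ↥I) (ε : ℝ) :
    {y : ↥I | |(y : ℝ) - (x : ℝ)| < ε} = Metric.ball x ε := by
  ext y; simp [Metric.mem_ball, Subtype.dist_eq, Real.dist_eq]

lemma mem_explosion_iff {m : Measure ↥I} {x : ↥I} :
    x ∈ explosionSet I m ↔ ∀ ε : ℝ, 0 < ε → m (Metric.ball x ε) = ∞ := by
  simp only [explosionSet, mem_setOf_eq, ball_eq]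

lemma isClosed_explosion (m : Measure ↥I) : IsClosed (explosionSet I m) := by
  rw [← isOpen_compl_iff, Metric.isOpen_iff]
  intro x hx
  rw [mem_compl_iff, mem_explosion_iff] at hx
  push_neg at hx
  obtain ⟨ε, hε, hfin⟩ := hx
  refine ⟨ε / 2, by linarith, fun y hy => ?_⟩
  rw [mem_compl_iff, mem_explosion_iff]
  push_neg
  refine ⟨ε / 2, by linarith, ?_⟩
  intro h
  apply hfin
  refine measure_mono_top (fun z hz => ?_) h
  calc dist z x ≤ dist z y + dist y x := dist_triangle _ _ _
  _ < ε / 2 + ε / 2 := add_lt_add hz (Metric.mem_ball.mp hy)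
  _ = ε := by ring

lemma measure_eq_top_of_mem_explosion {m : Measure ↥I} {x : ↥I} (hx : x ∈ explosionSet I m)
    {O : Set ↥I} (hO : IsOpen O) (hxO : x ∈ O) : m O = ∞ := by
  obtain ⟨ε, hε, hball⟩ := Metric.isOpen_iff.mp hO x hxO
  exact measure_mono_top hball (mem_explosion_iff.mp hx ε hε)

lemma finite_of_compact_disjoint_explosion {m : Measure ↥I} {K : Set ↥I} (hK : IsCompact K)
    (hdisj : K ∩ explosionSet I m = ∅) : m K ≠ ∞ := by
  have h : ∀ x : ↥I, x ∈ K → ∃ ε : ℝ, 0 < ε ∧ m (Metric.ball x ε) ≠ ∞ := by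
    intro x hx
    have : x ∉ explosionSet I m := fun h => (eq_empty_iff_forall_notMem.mp hdisj x) ⟨hx, h⟩
    rw [mem_explosion_iff] at this; push_neg at this; exact this
  choose! ε hε hfin using h
  obtain ⟨t, ht⟩ := hK.elim_finite_subcover (fun x : K => Metric.ball (x : ↥I) (ε x))
    (fun x => Metric.isOpen_ball)
    (fun x hx => mem_iUnion.mpr ⟨⟨x, hx⟩, Metric.mem_ball_self (hε _ hx)⟩)
  intro htop
  have hle : m K ≤ ∑ x ∈ t, m (Metric.ball (x : ↥I) (ε x)) :=
    le_trans (measure_mono ht) (measure_biUnion_finset_le t _)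
  rw [htop] at hle
  have : ∃ x ∈ t, m (Metric.ball (x : ↥I) (ε x)) = ∞ := by
    by_contra hc
    push_neg at hc
    exact absurd (lt_of_le_of_lt hle (ENNReal.sum_lt_top.mpr (fun x hx => (hc x hx).lt_top)))
      (lt_irrefl _)
  obtain ⟨x, hxt, hxinf⟩ := this
  exact hfin x x.2 hxinf

/-- For a regular measure, points of the explosion set are infinite atoms. -/
lemma explosion_atom {m : Measure ↥I} (hreg : IsRegularM m) {x : ↥I}
    (hx : x ∈ explosionSet I m) : m {x} = ∞ := by
  rw [hreg.1 {x} (measurableSet_singleton x)]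
  rw [iInf_eq_top]
  intro U
  rw [iInf_eq_top]
  rintro ⟨hU, hxU⟩
  exact measure_eq_top_of_mem_explosion hx hU (hxU rfl)

/-! ### ENNReal arithmetic -/

lemma eps_budget {a b : ℝ≥0∞} (h : a < b) (hb : b ≠ ∞) (k : ℕ) :
    ∃ ε : ℝ≥0∞, 0 < ε ∧ a + k * ε < b := by
  refine ⟨(b - a) / (k + 1), ENNReal.div_pos (tsub_pos_of_lt h).ne' (by simp), ?_⟩
  have hd0 : b - a ≠ 0 := (tsub_pos_of_lt h).ne'
  have hdtop : b - a ≠ ∞ := (lt_of_le_of_lt (tsub_le_self) (lt_top_iff_ne_top.mpr hb)).ne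
  have hka : (k : ℝ≥0∞) * ((b - a) / (k + 1)) < b - a := by
    have h1 : ((k : ℝ≥0∞) + 1) * ((b - a) / (k + 1)) = b - a :=
      ENNReal.mul_div_cancel' (by simp) (by simp)
    calc (k : ℝ≥0∞) * ((b - a) / (k + 1)) < ((k : ℝ≥0∞) + 1) * ((b - a) / (k + 1)) := by
          rw [ENNReal.mul_lt_mul_iff_left (ENNReal.div_pos hd0 (by simp)).ne'
            (ENNReal.div_lt_top hdtop (by simp)).ne]
          exact ENNReal.lt_add_right (by simp) one_ne_zero
    _ = b - a := h1
  calc a + k * ((b - a) / (k + 1)) < a + (b - a) :=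
        ENNReal.add_lt_add_left (by intro h'; rw [h'] at h; exact absurd h (by simp)) hka
  _ = b := add_tsub_cancel_of_le h.le

/-! ### Disjointification -/

lemma biUnion_erase {α β : Type*} [DecidableEq α] (s : Finset α) (f : α → Set β) {a : α}
    (ha : a ∈ s) : ⋃ p ∈ s, f p = f a ∪ ⋃ p ∈ s.erase a, f p := by
  conv_lhs => rw [← Finset.insert_erase ha]
  simp [Set.biUnion_insert]

lemma disjointify (P : ℚ → Prop) (n : ℕ) :
    ∀ (s : Finset (ℚ × ℚ)), s.card ≤ n → (∀ p ∈ s, P p.1 ∧ P p.2) →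
    ∃ t : Finset (ℚ × ℚ),
      (⋃ p ∈ t, Set.Ioo (p.1 : ℝ) (p.2 : ℝ)) = (⋃ p ∈ s, Set.Ioo (p.1 : ℝ) (p.2 : ℝ)) ∧
      (∀ p ∈ t, P p.1 ∧ P p.2) ∧
      (↑t : Set (ℚ × ℚ)).Pairwise
        (fun p q => Disjoint (Set.Ioo (p.1 : ℝ) (p.2 : ℝ)) (Set.Ioo (q.1 : ℝ) (q.2 : ℝ))) := by
  induction n with
  | zero =>
    intro s hcard hP
    refine ⟨s, rfl, hP, ?_⟩
    rw [Finset.card_eq_zero.mp (Nat.le_zero.mp hcard)]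
    simp
  | succ n ih =>
    intro s hcard hP
    by_cases hbad : ∃ p ∈ s, ∃ q ∈ s, p ≠ q ∧
        ¬ Disjoint (Set.Ioo (p.1 : ℝ) (p.2 : ℝ)) (Set.Ioo (q.1 : ℝ) (q.2 : ℝ))
    · obtain ⟨p, hp, q, hq, hpq, hnd⟩ := hbad
      obtain ⟨x, hxp, hxq⟩ := Set.not_disjoint_iff.mp hnd
      have hunion : Set.Ioo (p.1 : ℝ) (p.2 : ℝ) ∪ Set.Ioo (q.1 : ℝ) (q.2 : ℝ)
          = Set.Ioo ((min p.1 q.1 : ℚ) : ℝ) ((max p.2 q.2 : ℚ) : ℝ) := by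
        push_cast
        exact Set.Ioo_union_Ioo' (lt_trans hxq.1 hxp.2) (lt_trans hxp.1 hxq.2)
      classical
      set rest := (s.erase p).erase q with hrest
      have hqmem : q ∈ s.erase p := Finset.mem_erase.mpr ⟨hpq.symm, hq⟩
      set s' := insert (min p.1 q.1, max p.2 q.2) rest with hs'
      have hcard' : s'.card ≤ n := by
        have h1 : rest.card = s.card - 1 - 1 := by
          rw [hrest, Finset.card_erase_of_mem hqmem, Finset.card_erase_of_mem hp]
        have h2 : s'.card ≤ rest.card + 1 := Finset.card_insert_le _ _
        have h3 : 2 ≤ s.card := Finset.one_lt_card.mpr ⟨p, hp, q, hq, hpq⟩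
        omega
      have hunion' : (⋃ r ∈ s', Set.Ioo (r.1 : ℝ) (r.2 : ℝ))
          = ⋃ r ∈ s, Set.Ioo (r.1 : ℝ) (r.2 : ℝ) := by
        rw [biUnion_erase s _ hp, biUnion_erase (s.erase p) _ hqmem, hs']
        rw [Finset.set_biUnion_insert]
        rw [← Set.union_assoc, ← hunion]
      have hP' : ∀ r ∈ s', P r.1 ∧ P r.2 := by
        intro r hr
        rcases Finset.mem_insert.mp hr with h | h
        · subst h
          constructor
          · rcases min_choice p.1 q.1 with h' | h' <;> rw [h']
            exacts [(hP p hp).1, (hP q hq).1]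
          · rcases max_choice p.2 q.2 with h' | h' <;> rw [h']
            exacts [(hP p hp).2, (hP q hq).2]
        · exact hP r (Finset.mem_of_mem_erase (Finset.mem_of_mem_erase h))
      obtain ⟨t, ht1, ht2, ht3⟩ := ih s' hcard' hP'
      exact ⟨t, ht1.trans hunion', ht2, ht3⟩
    · push_neg at hbad
      exact ⟨s, rfl, hP, fun p hp q hq hpq => hbad p hp q hq hpq⟩

/-! ### The subbasis -/

def thetaSub (I : Set ℝ) : Set (Set (Measure ↥I)) :=
  ({U | ∃ (a b : ℚ) (c : ℝ≥0∞), (a : ℝ) ∈ I ∧ (b : ℝ) ∈ I ∧ (a : ℝ) < b ∧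
      U = {m : Measure ↥I | c < m (IooI I a b)}} ∪
   {U | ∃ (a b : ℚ) (d : ℝ≥0∞), (a : ℝ) ∈ I ∧ (b : ℝ) ∈ I ∧ (a : ℝ) ≤ b ∧
      U = {m : Measure ↥I | m (IccI I a b) < d}})

lemma thetaTop_eq : thetaTop I = TopologicalSpace.generateFrom (thetaSub I) := rfl

lemma lsc_rat {mseq : ℕ → Measure ↥I} {m : Measure ↥I}
    (hconv : Tendsto mseq atTop (𝓝 m)) {a b : ℚ} (ha : (a : ℝ) ∈ I) (hb : (b : ℝ) ∈ I)
    (hab : (a : ℝ) < b) {c : ℝ≥0∞} (hc : c < m (IooI I a b)) :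
    ∀ᶠ n in atTop, c < mseq n (IooI I a b) := by
  have hopen : IsOpen {μ : Measure ↥I | c < μ (IooI I a b)} :=
    TopologicalSpace.GenerateOpen.basic _ (Or.inl ⟨a, b, c, ha, hb, hab, rfl⟩)
  exact hconv.eventually (hopen.eventually_mem hc)

lemma usc_rat {mseq : ℕ → Measure ↥I} {m : Measure ↥I}
    (hconv : Tendsto mseq atTop (𝓝 m)) {a b : ℚ} (ha : (a : ℝ) ∈ I) (hb : (b : ℝ) ∈ I)
    (hab : (a : ℝ) ≤ b) {d : ℝ≥0∞} (hd : m (IccI I a b) < d) :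
    ∀ᶠ n in atTop, mseq n (IccI I a b) < d := by
  have hopen : IsOpen {μ : Measure ↥I | μ (IccI I a b) < d} :=
    TopologicalSpace.GenerateOpen.basic _ (Or.inr ⟨a, b, d, ha, hb, hab, rfl⟩)
  exact hconv.eventually (hopen.eventually_mem hd)

lemma tendsto_theta_of_subbasic {mseq : ℕ → Measure ↥I} {m : Measure ↥I}
    (h : ∀ s ∈ thetaSub I, m ∈ s → ∀ᶠ n in atTop, mseq n ∈ s) :
    Tendsto mseq atTop (𝓝 m) :=
  tendsto_nhds_generateFrom_iff.mpr h

/-! ### Covers by rational intervals -/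

lemma nice_cover (hIopen : IsOpen I) {K U : Set ↥I} (hK : IsCompact K) (hU : IsOpen U)
    (hKU : K ⊆ U) :
    ∃ t : Finset (ℚ × ℚ), (∀ p ∈ t, ((p.1 : ℝ) ∈ I ∧ (p.2 : ℝ) ∈ I)) ∧
      (↑t : Set (ℚ × ℚ)).Pairwise
        (fun p q => Disjoint (Set.Ioo (p.1 : ℝ) (p.2 : ℝ)) (Set.Ioo (q.1 : ℝ) (q.2 : ℝ))) ∧
      (⋃ p ∈ t, IooI I (p.1 : ℝ) (p.2 : ℝ)) ⊆ U ∧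
      K ⊆ ⋃ p ∈ t, IooI I (p.1 : ℝ) (p.2 : ℝ) := by
  classical
  have hpt : ∀ x : ↥I, x ∈ K → ∃ p : ℚ × ℚ, ((p.1 : ℝ) ∈ I ∧ (p.2 : ℝ) ∈ I) ∧
      x ∈ IooI I (p.1 : ℝ) (p.2 : ℝ) ∧ IooI I (p.1 : ℝ) (p.2 : ℝ) ⊆ U := by
    intro x hx
    obtain ⟨εU, hεU, hballU⟩ := Metric.isOpen_iff.mp hU x (hKU hx)
    obtain ⟨εI, hεI, hballI⟩ := Metric.isOpen_iff.mp hIopen (x : ℝ) x.2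
    set ε := min εU εI with hε
    have hεpos : 0 < ε := lt_min hεU hεI
    obtain ⟨a, ha1, ha2⟩ := exists_rat_btwn (by linarith : (x : ℝ) - ε < (x : ℝ))
    obtain ⟨b, hb1, hb2⟩ := exists_rat_btwn (by linarith : (x : ℝ) < (x : ℝ) + ε)
    have hIn : ∀ z : ℝ, (x : ℝ) - ε < z → z < (x : ℝ) + ε → z ∈ I := by
      intro z h1 h2
      apply hballI
      rw [Metric.mem_ball, Real.dist_eq, abs_lt]
      constructor <;> [linarith [min_le_right εU εI]; linarith [min_le_right εU εI]]
    refine ⟨(a, b), ⟨hIn a ha1 (ha2.trans (hb1.trans hb2)), hIn b (ha1.trans (ha2.trans hb1)) hb2⟩,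
      ⟨ha2, hb1⟩, ?_⟩
    intro y hy
    apply hballU
    rw [Metric.mem_ball, Subtype.dist_eq, Real.dist_eq, abs_lt]
    obtain ⟨hy1, hy2⟩ := hy
    have h1 : (x : ℝ) - ε < (y : ℝ) := lt_trans ha1 hy1
    have h2 : (y : ℝ) < (x : ℝ) + ε := lt_trans hy2 hb2
    constructor <;> [linarith [min_le_left εU εI]; linarith [min_le_left εU εI]]
  choose! pt hptI hptmem hptU using hpt
  obtain ⟨s, hs⟩ := hK.elim_finite_subcover
    (fun x : K => IooI I ((pt x).1 : ℝ) ((pt x).2 : ℝ))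
    (fun x => isOpen_iooI _ _)
    (fun x hx => mem_iUnion.mpr ⟨⟨x, hx⟩, hptmem x hx⟩)
  set s₀ : Finset (ℚ × ℚ) := s.image (fun x : ↑K => pt x.1) with hs₀
  have hs₀I : ∀ p ∈ s₀, (p.1 : ℝ) ∈ I ∧ (p.2 : ℝ) ∈ I := by
    intro p hp
    obtain ⟨x, _, hxe⟩ := Finset.mem_image.mp hp
    exact hxe ▸ hptI x.1 x.2
  obtain ⟨t, ht1, ht2, ht3⟩ := disjointify (fun r => (r : ℝ) ∈ I) s₀.card s₀ le_rfl
    (fun p hp => hs₀I p hp)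
  have hpre : (⋃ p ∈ t, IooI I (p.1 : ℝ) (p.2 : ℝ))
      = ⋃ p ∈ s₀, IooI I (p.1 : ℝ) (p.2 : ℝ) := by
    simp only [iooI_eq, ← Set.preimage_iUnion₂, ht1]
  have hsub : (⋃ p ∈ s₀, IooI I (p.1 : ℝ) (p.2 : ℝ)) ⊆ U := by
    refine Set.iUnion₂_subset fun p hp => ?_
    obtain ⟨x, _, hxe⟩ := Finset.mem_image.mp hp
    exact hxe ▸ hptU x.1 x.2
  refine ⟨t, ht2, ht3, hpre ▸ hsub, ?_⟩
  rw [hpre]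
  refine hs.trans ?_
  intro y hy
  obtain ⟨x, hxs, hyx⟩ := Set.mem_iUnion₂.mp hy
  exact Set.mem_biUnion (Finset.mem_image_of_mem _ hxs) hyx

/-! ### Lower semicontinuity on open sets -/

lemma lsc_open {mseq : ℕ → Measure ↥I} {m : Measure ↥I} (hreg : IsRegularM m)
    (hconv : Tendsto mseq atTop (𝓝 m)) (hIopen : IsOpen I)
    {O : Set ↥I} (hO : IsOpen O) {c : ℝ≥0∞} (hc : c < m O) :
    ∀ᶠ n in atTop, c < mseq n O := by
  classical
  rw [hreg.2 O hO.measurableSet] at hc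
  rw [lt_iSup_iff] at hc
  obtain ⟨K, hc⟩ := hc
  rw [lt_iSup_iff] at hc
  obtain ⟨⟨hKcomp, hKO⟩, hcK⟩ := hc
  obtain ⟨t, htI, htdisj, htU, hKcov⟩ := nice_cover hIopen hKcomp hO hKO
  have hdisjI : (↑t : Set (ℚ × ℚ)).PairwiseDisjoint
      (fun p : ℚ × ℚ => IooI I (p.1 : ℝ) (p.2 : ℝ)) := by
    intro p hp q hq hpq
    simp only [iooI_eq]
    exact Disjoint.preimage _ (htdisj hp hq hpq)
  have hsum : m K ≤ ∑ p ∈ t, m (IooI I (p.1 : ℝ) (p.2 : ℝ)) := by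
    rw [← measure_biUnion_finset hdisjI (fun p _ => measurableSet_iooI _ _)]
    exact measure_mono hKcov
  have hcS : c < ∑ p ∈ t, m (IooI I (p.1 : ℝ) (p.2 : ℝ)) := hcK.trans_le hsum
  have hnonempty_of_pos : ∀ p : ℚ × ℚ, m (IooI I (p.1 : ℝ) (p.2 : ℝ)) ≠ 0 → p.1 < p.2 := by
    intro p hpos
    by_contra hle
    have : IooI I (p.1 : ℝ) (p.2 : ℝ) = ∅ := by
      ext y
      simp only [IooI, mem_setOf_eq, Set.mem_empty_iff_false, iff_false, not_and, not_lt]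
      intro h1
      exact le_trans (by exact_mod_cast not_lt.mp hle) h1.le
    rw [this, measure_empty] at hpos
    exact hpos rfl
  by_cases hinf : ∃ p ∈ t, m (IooI I (p.1 : ℝ) (p.2 : ℝ)) = ∞
  · obtain ⟨p, hpt, hptop⟩ := hinf
    have hctop : c ≠ ∞ := ne_top_of_lt hcS
    have hab : p.1 < p.2 := hnonempty_of_pos p (by rw [hptop]; exact ENNReal.top_ne_zero)
    have hev := lsc_rat hconv (htI p hpt).1 (htI p hpt).2 (by exact_mod_cast hab)
      (c := c) (by rw [hptop]; exact lt_top_iff_ne_top.mpr hctop)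
    filter_upwards [hev] with n hn
    exact hn.trans_le (measure_mono ((Set.subset_biUnion_of_mem hpt).trans htU))
  · push_neg at hinf
    have hS : (∑ p ∈ t, m (IooI I (p.1 : ℝ) (p.2 : ℝ))) ≠ ∞ :=
      (ENNReal.sum_lt_top.mpr (fun p hp => (hinf p hp).lt_top)).ne
    obtain ⟨ε, hε, hεlt⟩ := eps_budget hcS hS t.card
    have hev : ∀ p ∈ t, ∀ᶠ n in atTop,
        m (IooI I (p.1 : ℝ) (p.2 : ℝ)) - ε ≤ mseq n (IooI I (p.1 : ℝ) (p.2 : ℝ)) := by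
      intro p hpt
      by_cases hple : m (IooI I (p.1 : ℝ) (p.2 : ℝ)) ≤ ε
      · rw [tsub_eq_zero_of_le hple]
        exact Filter.Eventually.of_forall (fun n => zero_le)
      · push_neg at hple
        have hab : p.1 < p.2 := hnonempty_of_pos p (by
          intro h0; rw [h0] at hple; exact absurd hple (by simp))
        have hlt : m (IooI I (p.1 : ℝ) (p.2 : ℝ)) - ε < m (IooI I (p.1 : ℝ) (p.2 : ℝ)) :=
          ENNReal.sub_lt_self (hinf p hpt) (by intro h0; rw [h0] at hple; simp at hple) hε.ne'
        filter_upwards [lsc_rat hconv (htI p hpt).1 (htI p hpt).2 (by exact_mod_cast hab) hlt]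
          with n hn
        exact hn.le
    rw [← Filter.eventually_all_finset] at hev
    filter_upwards [hev] with n hn
    have h1 : ∑ p ∈ t, m (IooI I (p.1 : ℝ) (p.2 : ℝ)) ≤
        (∑ p ∈ t, (m (IooI I (p.1 : ℝ) (p.2 : ℝ)) - ε)) + t.card * ε := by
      calc ∑ p ∈ t, m (IooI I (p.1 : ℝ) (p.2 : ℝ))
          ≤ ∑ p ∈ t, ((m (IooI I (p.1 : ℝ) (p.2 : ℝ)) - ε) + ε) :=
            Finset.sum_le_sum (fun p _ => le_tsub_add)
      _ = (∑ p ∈ t, (m (IooI I (p.1 : ℝ) (p.2 : ℝ)) - ε)) + t.card * ε := by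
            rw [Finset.sum_add_distrib, Finset.sum_const, nsmul_eq_mul]
    have h2 : c < ∑ p ∈ t, (m (IooI I (p.1 : ℝ) (p.2 : ℝ)) - ε) := by
      by_contra hcon
      push_neg at hcon
      have hx := h1.trans (add_le_add_left hcon (t.card * ε))
      exact absurd (hx.trans_lt hεlt) (lt_irrefl _)
    have h3 : ∑ p ∈ t, (m (IooI I (p.1 : ℝ) (p.2 : ℝ)) - ε)
        ≤ ∑ p ∈ t, mseq n (IooI I (p.1 : ℝ) (p.2 : ℝ)) :=
      Finset.sum_le_sum (fun p hp => hn p hp)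
    have hdisjn : (↑t : Set (ℚ × ℚ)).PairwiseDisjoint
        (fun p : ℚ × ℚ => IooI I (p.1 : ℝ) (p.2 : ℝ)) := hdisjI
    have h4 : ∑ p ∈ t, mseq n (IooI I (p.1 : ℝ) (p.2 : ℝ)) ≤ mseq n O := by
      rw [← measure_biUnion_finset hdisjn (fun p _ => measurableSet_iooI _ _)]
      exact measure_mono htU
    exact h2.trans_le (h3.trans h4)

/-! ### Upper semicontinuity on compact sets -/

lemma usc_compact {mseq : ℕ → Measure ↥I} {m : Measure ↥I} (hreg : IsRegularM m)
    (hconv : Tendsto mseq atTop (𝓝 m)) (hIopen : IsOpen I) (hIconn : I.OrdConnected)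
    {K : Set ↥I} (hK : IsCompact K) {d : ℝ≥0∞} (hd : m K < d) :
    ∀ᶠ n in atTop, mseq n K < d := by
  classical
  have hKmeas : MeasurableSet K := hK.isClosed.measurableSet
  have hmKtop : m K ≠ ∞ := (hd.trans_le le_top).ne
  set d₀ := min d (m K + 1) with hd₀def
  have hd₀ : m K < d₀ := lt_min hd (ENNReal.lt_add_right hmKtop one_ne_zero)
  have hd₀top : d₀ ≠ ∞ :=
    ((min_le_right _ _).trans_lt (ENNReal.add_lt_top.mpr
      ⟨hmKtop.lt_top, ENNReal.one_lt_top⟩)).ne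
  suffices h : ∀ᶠ n in atTop, mseq n K < d₀ by
    filter_upwards [h] with n hn
    exact hn.trans_le (min_le_left _ _)
  rw [hreg.1 K hKmeas] at hd₀
  rw [iInf_lt_iff] at hd₀
  obtain ⟨U, hU⟩ := hd₀
  rw [iInf_lt_iff] at hU
  obtain ⟨⟨hUopen, hKU⟩, hmU⟩ := hU
  obtain ⟨t, htI, htdisj, htU, hKcov⟩ := nice_cover hIopen hK hUopen hKU
  set t' := t.filter (fun p => (K ∩ IooI I (p.1 : ℝ) (p.2 : ℝ)).Nonempty) with ht'def
  have hshrink : ∀ p : ℚ × ℚ, p ∈ t' → ∃ a b : ℚ, (a : ℝ) ∈ I ∧ (b : ℝ) ∈ I ∧ (a : ℝ) ≤ b ∧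
      Set.Icc (a : ℝ) (b : ℝ) ⊆ Set.Ioo (p.1 : ℝ) (p.2 : ℝ) ∧
      K ∩ IooI I (p.1 : ℝ) (p.2 : ℝ) ⊆ IccI I (a : ℝ) (b : ℝ) := by
    intro p hpt'
    rw [ht'def, Finset.mem_filter] at hpt'
    obtain ⟨hpt, hne⟩ := hpt'
    -- K ∩ IooI p is compact: it equals K minus the other (open) intervals
    have hcomp : IsCompact (K ∩ IooI I (p.1 : ℝ) (p.2 : ℝ)) := by
      have heq : K ∩ IooI I (p.1 : ℝ) (p.2 : ℝ)
          = K ∩ (⋃ q ∈ t.erase p, IooI I (q.1 : ℝ) (q.2 : ℝ))ᶜ := by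
        apply Set.Subset.antisymm
        · rintro y ⟨hyK, hyp⟩
          refine ⟨hyK, ?_⟩
          rw [Set.mem_compl_iff]
          intro hmem
          obtain ⟨q, hqt, hyq⟩ := Set.mem_iUnion₂.mp hmem
          have hqe := Finset.mem_erase.mp hqt
          have hdq := htdisj hpt (Finset.mem_coe.mpr hqe.2) (fun h => hqe.1 h.symm)
          exact Set.disjoint_left.mp (Disjoint.preimage Subtype.val hdq) hyp hyq
        · rintro y ⟨hyK, hyc⟩
          refine ⟨hyK, ?_⟩
          have := hKcov hyK
          obtain ⟨q, hqt, hyq⟩ := Set.mem_iUnion₂.mp this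
          by_cases hqp : q = p
          · exact hqp ▸ hyq
          · exact absurd (Set.mem_biUnion (Finset.mem_erase.mpr ⟨hqp, hqt⟩) hyq) hyc
      rw [heq]
      exact hK.inter_right (IsOpen.isClosed_compl (isOpen_biUnion
        (fun q _ => isOpen_iooI _ _)))
    set S := Subtype.val '' (K ∩ IooI I (p.1 : ℝ) (p.2 : ℝ)) with hSdef
    have hScomp : IsCompact S := hcomp.image continuous_subtype_val
    have hSne : S.Nonempty := hne.image _
    have hSsub : S ⊆ Set.Ioo (p.1 : ℝ) (p.2 : ℝ) := by
      rintro z ⟨y, hy, rfl⟩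
      exact hy.2
    have hx₀ : sInf S ∈ S := hScomp.sInf_mem hSne
    have hy₀ : sSup S ∈ S := hScomp.sSup_mem hSne
    obtain ⟨a, ha1, ha2⟩ := exists_rat_btwn (hSsub hx₀).1
    obtain ⟨b, hb1, hb2⟩ := exists_rat_btwn (hSsub hy₀).2
    have hIccI : Set.Icc (p.1 : ℝ) (p.2 : ℝ) ⊆ I := hIconn.out (htI p hpt).1 (htI p hpt).2
    have hx₀y₀ : sInf S ≤ sSup S := csInf_le_csSup hSne hScomp.bddBelow hScomp.bddAbove
    refine ⟨a, b, hIccI ⟨ha1.le, (ha2.trans_le (hx₀y₀.trans (hSsub hy₀).2.le)).le⟩,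
      hIccI ⟨((hSsub hx₀).1.trans_le (hx₀y₀.trans hb1.le)).le, hb2.le⟩,
      by exact_mod_cast (ha2.trans_le (hx₀y₀.trans hb1.le)).le, ?_, ?_⟩
    · intro z hz
      exact ⟨ha1.trans_le hz.1, hz.2.trans_lt hb2⟩
    · intro y hy
      have hyS : (y : ℝ) ∈ S := ⟨y, hy, rfl⟩
      exact ⟨(ha2.trans_le (csInf_le hScomp.bddBelow hyS)).le,
        ((le_csSup hScomp.bddAbove hyS).trans_lt hb1).le⟩
  choose! A B hA hB hAB hIccIoo hKIcc using hshrink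
  have hKcov' : K ⊆ ⋃ p ∈ t', IccI I ((A p : ℝ)) ((B p : ℝ)) := by
    intro x hx
    obtain ⟨q, hqt, hxq⟩ := Set.mem_iUnion₂.mp (hKcov hx)
    have hqt' : q ∈ t' := by
      rw [ht'def, Finset.mem_filter]
      exact ⟨hqt, ⟨x, hx, hxq⟩⟩
    exact Set.mem_biUnion hqt' (hKIcc q hqt' ⟨hx, hxq⟩)
  have hIccU : ∀ p ∈ t', IccI I ((A p : ℝ)) ((B p : ℝ)) ⊆ U := by
    intro p hpt' y hy
    have : (y : ℝ) ∈ Set.Ioo (p.1 : ℝ) (p.2 : ℝ) := hIccIoo p hpt' hy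
    refine htU (Set.mem_biUnion (Finset.mem_of_mem_filter p hpt') this)
  have hdisj' : (↑t' : Set (ℚ × ℚ)).PairwiseDisjoint
      (fun p : ℚ × ℚ => IccI I ((A p : ℝ)) ((B p : ℝ))) := by
    intro p hp q hq hpq
    have hdq := htdisj (Finset.mem_coe.mpr (Finset.mem_of_mem_filter p hp))
      (Finset.mem_coe.mpr (Finset.mem_of_mem_filter q hq)) hpq
    have h1 : IccI I ((A p : ℝ)) ((B p : ℝ)) ⊆ Subtype.val ⁻¹' (Set.Ioo (p.1 : ℝ) (p.2 : ℝ)) :=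
      fun y hy => hIccIoo p hp hy
    have h2 : IccI I ((A q : ℝ)) ((B q : ℝ)) ⊆ Subtype.val ⁻¹' (Set.Ioo (q.1 : ℝ) (q.2 : ℝ)) :=
      fun y hy => hIccIoo q hq hy
    exact ((Disjoint.preimage Subtype.val hdq).mono h1 h2)
  have hsum : ∑ p ∈ t', m (IccI I ((A p : ℝ)) ((B p : ℝ))) ≤ m U := by
    rw [← measure_biUnion_finset hdisj' (fun p _ => measurableSet_iccI _ _)]
    exact measure_mono (Set.iUnion₂_subset hIccU)
  obtain ⟨ε, hε, hεlt⟩ := eps_budget hmU hd₀top t'.card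
  have hev : ∀ p ∈ t', ∀ᶠ n in atTop,
      mseq n (IccI I ((A p : ℝ)) ((B p : ℝ))) < m (IccI I ((A p : ℝ)) ((B p : ℝ))) + ε := by
    intro p hpt'
    have hfin : m (IccI I ((A p : ℝ)) ((B p : ℝ))) ≠ ∞ :=
      ((measure_mono (hIccU p hpt')).trans_lt (hmU.trans_le le_top)).ne
    exact usc_rat hconv (hA p hpt') (hB p hpt') (hAB p hpt')
      (ENNReal.lt_add_right hfin hε.ne')
  rw [← Filter.eventually_all_finset] at hev
  filter_upwards [hev] with n hn
  calc mseq n K ≤ ∑ p ∈ t', mseq n (IccI I ((A p : ℝ)) ((B p : ℝ))) :=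
        le_trans (measure_mono hKcov') (measure_biUnion_finset_le _ _)
  _ ≤ ∑ p ∈ t', (m (IccI I ((A p : ℝ)) ((B p : ℝ))) + ε) :=
        Finset.sum_le_sum (fun p hp => (hn p hp).le)
  _ = (∑ p ∈ t', m (IccI I ((A p : ℝ)) ((B p : ℝ)))) + t'.card * ε := by
        rw [Finset.sum_add_distrib, Finset.sum_const, nsmul_eq_mul]
  _ ≤ m U + t'.card * ε := add_le_add_left hsum _
  _ < d₀ := hεlt

/-! ### Urysohn wrapper and integral comparisons -/

lemma urysohn (hIopen : IsOpen I) {K U : Set ↥I} (hK : IsCompact K) (hU : IsOpen U)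
    (hKU : K ⊆ U) :
    ∃ f : ↥I → ℝ, Continuous f ∧ (∀ y, 0 ≤ f y) ∧ (∀ y, f y ≤ 1) ∧ HasCompactSupport f ∧
      tsupport f ⊆ U ∧ Set.EqOn f 1 K := by
  haveI : LocallyCompactSpace ↥I := hIopen.locallyCompactSpace
  obtain ⟨k, hkcomp, hkclosed, hKk, hkU⟩ := exists_compact_closed_between hK hU hKU
  obtain ⟨f, hf1, hf0, hfc, hficc⟩ := exists_continuous_one_zero_of_isCompact hK
    isOpen_interior.isClosed_compl (disjoint_compl_right_iff_subset.mpr hKk)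
  refine ⟨f, f.continuous, fun y => (hficc y).1, fun y => (hficc y).2, hfc, ?_, hf1⟩
  have hsupp : Function.support f ⊆ interior k := by
    intro y hy
    by_contra hmem
    exact hy (hf0 hmem)
  calc tsupport f ⊆ closure (interior k) := closure_mono hsupp
  _ ⊆ k := hkclosed.closure_subset_iff.mpr interior_subset
  _ ⊆ U := hkU

lemma le_lintegral_ofReal {μ : Measure ↥I} {f : ↥I → ℝ} {K : Set ↥I} (hK : MeasurableSet K)
    (h1 : Set.EqOn f 1 K) : μ K ≤ ∫⁻ y, ENNReal.ofReal (f y) ∂μ := by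
  rw [← lintegral_indicator_one hK]
  apply lintegral_mono
  intro y
  by_cases hy : y ∈ K
  · simp [Set.indicator_of_mem hy, h1 hy]
  · simp [Set.indicator_of_notMem hy]

lemma lintegral_ofReal_le {μ : Measure ↥I} {f : ↥I → ℝ} {S : Set ↥I} (hS : MeasurableSet S)
    (hsupp : tsupport f ⊆ S) (hle : ∀ y, f y ≤ 1) :
    ∫⁻ y, ENNReal.ofReal (f y) ∂μ ≤ μ S := by
  rw [← lintegral_indicator_one hS]
  apply lintegral_mono
  intro y
  by_cases hy : y ∈ S
  · simpa [Set.indicator_of_mem hy] using ENNReal.ofReal_le_one.mpr (hle y)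
  · have : f y = 0 := image_eq_zero_of_notMem_tsupport (fun h => hy (hsupp h))
    simp [Set.indicator_of_notMem hy, this]

/-! ### Forward direction -/

lemma forward_i {mseq : ℕ → Measure ↥I} {m : Measure ↥I} (hreg : IsRegularM m)
    (hconv : Tendsto mseq atTop (𝓝 m)) (hIopen : IsOpen I)
    {O : Set ↥I} (hO : IsOpen O) (hne : (O ∩ explosionSet I m).Nonempty) :
    Tendsto (fun n => mseq n O) atTop (𝓝 (∞ : ℝ≥0∞)) := by
  obtain ⟨x, hxO, hxe⟩ := hne
  have hmO : m O = ∞ := measure_eq_top_of_mem_explosion hxe hO hxO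
  rw [ENNReal.tendsto_nhds_top_iff_nnreal]
  intro c
  exact lsc_open hreg hconv hIopen hO (by rw [hmO]; exact ENNReal.coe_lt_top)

/-! ### Backward direction -/

lemma backward {mseq : ℕ → MSpace I} {m : MSpace I} (hIopen : IsOpen I)
    (hIconn : I.OrdConnected)
    (hi : ∀ O : Set ↥I, IsOpen O → (O ∩ explosionSet I m.1).Nonempty →
        Tendsto (fun n => (mseq n).1 O) atTop (𝓝 (∞ : ℝ≥0∞)))
    (hii : ∀ φ : ↥I → ℝ, Continuous φ → (∀ y, 0 ≤ φ y) → HasCompactSupport φ →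
        tsupport φ ⊆ (explosionSet I m.1)ᶜ →
        Tendsto (fun n => ∫⁻ y, ENNReal.ofReal (φ y) ∂(mseq n).1) atTop
          (𝓝 (∫⁻ y, ENNReal.ofReal (φ y) ∂m.1))) :
    Tendsto mseq atTop (𝓝 m) := by
  rw [tendsto_subtype_rng]
  apply tendsto_theta_of_subbasic
  rintro s (⟨a, b, c, ha, hb, hab, rfl⟩ | ⟨a, b, d, ha, hb, hab, rfl⟩) hm
  · -- lsc subbasic sets
    simp only [mem_setOf_eq] at hm ⊢
    by_cases hmeet : (IooI I (a : ℝ) (b : ℝ) ∩ explosionSet I m.1).Nonempty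
    · have htend := hi _ (isOpen_iooI _ _) hmeet
      exact htend.eventually (eventually_gt_nhds (lt_top_iff_ne_top.mpr (ne_top_of_lt hm)) )
    · rw [m.2.2 _ (measurableSet_iooI _ _), lt_iSup_iff] at hm
      obtain ⟨K, hm⟩ := hm
      rw [lt_iSup_iff] at hm
      obtain ⟨⟨hKcomp, hKIoo⟩, hcK⟩ := hm
      obtain ⟨f, hfc, hf0, hf1, hfcs, hfsupp, hfK⟩ :=
        urysohn hIopen hKcomp (isOpen_iooI (a : ℝ) (b : ℝ)) hKIoo
      have hdisj : IooI I (a : ℝ) (b : ℝ) ⊆ (explosionSet I m.1)ᶜ := by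
        intro y hy hye
        exact hmeet ⟨y, hy, hye⟩
      have htend := hii f hfc hf0 hfcs (hfsupp.trans hdisj)
      have hlow : c < ∫⁻ y, ENNReal.ofReal (f y) ∂m.1 :=
        hcK.trans_le (le_lintegral_ofReal hKcomp.isClosed.measurableSet hfK)
      filter_upwards [htend.eventually (eventually_gt_nhds hlow)] with n hn
      exact hn.trans_le (lintegral_ofReal_le (measurableSet_iooI _ _) hfsupp hf1)
  · -- usc subbasic sets
    simp only [mem_setOf_eq] at hm ⊢
    have hKcomp : IsCompact (IccI I (a : ℝ) (b : ℝ)) := isCompact_iccI hIconn ha hb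
    have hIcc_e : IccI I (a : ℝ) (b : ℝ) ∩ explosionSet I m.1 = ∅ := by
      by_contra hcon
      obtain ⟨x, hxIcc, hxe⟩ := Set.nonempty_iff_ne_empty.mpr hcon
      have h1 : m.1 {x} = ∞ := explosion_atom m.2 hxe
      have h2 : m.1 (IccI I (a : ℝ) (b : ℝ)) = ∞ :=
        top_le_iff.mp (h1 ▸ measure_mono (Set.singleton_subset_iff.mpr hxIcc))
      rw [h2] at hm
      exact absurd hm not_top_lt
    rw [m.2.1 _ (measurableSet_iccI _ _), iInf_lt_iff] at hm
    obtain ⟨U, hm⟩ := hm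
    rw [iInf_lt_iff] at hm
    obtain ⟨⟨hUopen, hIccU⟩, hmU⟩ := hm
    set U' := U ∩ (explosionSet I m.1)ᶜ with hU'def
    have hU'open : IsOpen U' := hUopen.inter (isClosed_explosion m.1).isOpen_compl
    have hIccU' : IccI I (a : ℝ) (b : ℝ) ⊆ U' := by
      intro y hy
      refine ⟨hIccU hy, fun hye => ?_⟩
      exact (eq_empty_iff_forall_notMem.mp hIcc_e y) ⟨hy, hye⟩
    obtain ⟨f, hfc, hf0, hf1, hfcs, hfsupp, hfK⟩ := urysohn hIopen hKcomp hU'open hIccU'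
    have htend := hii f hfc hf0 hfcs (hfsupp.trans (Set.inter_subset_right))
    have hupp : ∫⁻ y, ENNReal.ofReal (f y) ∂m.1 < d :=
      lt_of_le_of_lt (lintegral_ofReal_le hU'open.measurableSet hfsupp hf1)
        (lt_of_le_of_lt (measure_mono Set.inter_subset_left) hmU)
    filter_upwards [htend.eventually (eventually_lt_nhds hupp)] with n hn
    exact lt_of_le_of_lt
      (le_lintegral_ofReal hKcomp.isClosed.measurableSet hfK) hn

lemma forward_ii {mseq : ℕ → Measure ↥I} {m : Measure ↥I} (hreg : IsRegularM m)
    (hconv : Tendsto mseq atTop (𝓝 m)) (hIopen : IsOpen I) (hIconn : I.OrdConnected)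
    {φ : ↥I → ℝ} (hφc : Continuous φ) (hφ0 : ∀ y, 0 ≤ φ y) (hφcs : HasCompactSupport φ)
    (hφsupp : tsupport φ ⊆ (explosionSet I m)ᶜ) :
    Tendsto (fun n => ∫⁻ y, ENNReal.ofReal (φ y) ∂(mseq n)) atTop
      (𝓝 (∫⁻ y, ENNReal.ofReal (φ y) ∂m)) := by
  classical
  set K := tsupport φ with hKdef
  have hKcomp : IsCompact K := hφcs
  have hKmeas : MeasurableSet K := (isClosed_tsupport φ).measurableSet
  have hdisj : K ∩ explosionSet I m = ∅ :=
    eq_empty_iff_forall_notMem.mpr (fun x hx => hφsupp hx.1 hx.2)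
  have hCfin : m K ≠ ∞ := finite_of_compact_disjoint_explosion hKcomp hdisj
  have hbound := usc_compact hreg hconv hIopen hIconn hKcomp
    (ENNReal.lt_add_right hCfin one_ne_zero)
  rw [eventually_atTop] at hbound
  obtain ⟨N, hN⟩ := hbound
  have hφmeas : Measurable φ := hφc.measurable
  obtain ⟨T, hT⟩ : ∃ T : ℝ, ∀ y, φ y ≤ T := by
    obtain ⟨T, hT⟩ := hφc.bddAbove_range_of_hasCompactSupport hφcs
    exact ⟨T, fun y => hT (Set.mem_range_self y)⟩
  have hlayer : ∀ μ : Measure ↥I, ∫⁻ y, ENNReal.ofReal (φ y) ∂μ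
      = ∫⁻ t in Set.Ioi (0 : ℝ), μ {a | t < φ a} := fun μ =>
    lintegral_eq_lintegral_meas_lt μ (Filter.Eventually.of_forall hφ0) hφmeas.aemeasurable
  have hopen_level : ∀ t : ℝ, IsOpen {a : ↥I | t < φ a} :=
    fun t => isOpen_lt continuous_const hφc
  have hsub_level : ∀ t : ℝ, 0 < t → {a : ↥I | t < φ a} ⊆ K := by
    intro t ht a ha
    exact subset_closure (fun h0 => by rw [mem_setOf_eq, h0] at ha; linarith)
  have hcomp_level : ∀ t : ℝ, 0 < t → IsCompact {a : ↥I | t ≤ φ a} := by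
    intro t ht
    refine hKcomp.of_isClosed_subset (isClosed_le continuous_const hφc) ?_
    intro a ha
    exact subset_closure (fun h0 => by rw [mem_setOf_eq, h0] at ha; linarith)
  set μK := m.restrict K with hμKdef
  haveI : IsFiniteMeasure μK := ⟨by
    rw [hμKdef, Measure.restrict_apply_univ]; exact hCfin.lt_top⟩
  have hcnt : {t : ℝ | 0 < μK {a | φ a = t}}.Countable :=
    Measure.countable_meas_level_set_pos hφmeas
  rw [← tendsto_add_atTop_iff_nat N]
  have hlayern : (fun n => ∫⁻ y, ENNReal.ofReal (φ y) ∂(mseq (n + N)))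
      = fun n => ∫⁻ t in Set.Ioi (0 : ℝ), mseq (n + N) {a | t < φ a} := by
    funext n; exact hlayer _
  rw [hlayern, hlayer m]
  apply tendsto_lintegral_of_dominated_convergence
    (bound := Set.indicator (Set.Ioc (0 : ℝ) T) (fun _ => m K + 1))
  · intro n
    exact Antitone.measurable (fun t1 t2 h => measure_mono (fun a ha => lt_of_le_of_lt h ha))
  · intro n
    refine (ae_restrict_mem measurableSet_Ioi).mono (fun t ht => ?_)
    by_cases htT : t ≤ T
    · rw [Set.indicator_of_mem (Set.mem_Ioc.mpr ⟨ht, htT⟩)]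
      exact le_of_lt (lt_of_le_of_lt (measure_mono (hsub_level t ht)) (hN (n + N) (by omega)))
    · have hempty : {a : ↥I | t < φ a} = ∅ := by
        ext a
        simp only [mem_setOf_eq, Set.mem_empty_iff_false, iff_false, not_lt]
        exact (hT a).trans (not_le.mp htT).le
      simp [hempty]
  · have h1 : ∫⁻ t in Set.Ioi (0 : ℝ), (Set.Ioc (0 : ℝ) T).indicator (fun _ => m K + 1) t
        = (m K + 1) * (volume.restrict (Set.Ioi (0 : ℝ))) (Set.Ioc (0 : ℝ) T) :=
      lintegral_indicator_const measurableSet_Ioc _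
    rw [h1]
    refine ENNReal.mul_ne_top (ENNReal.add_ne_top.mpr ⟨hCfin, ENNReal.one_ne_top⟩) ?_
    rw [Measure.restrict_apply measurableSet_Ioc]
    exact ne_of_lt (lt_of_le_of_lt (measure_mono Set.inter_subset_left)
      (by rw [Real.volume_Ioc]; exact ENNReal.ofReal_lt_top))
  · have hae : ∀ᵐ t ∂volume, t ∉ {t : ℝ | 0 < μK {a | φ a = t}} :=
      measure_eq_zero_iff_ae_notMem.mp (hcnt.measure_zero volume)
    filter_upwards [ae_restrict_of_ae hae, ae_restrict_mem measurableSet_Ioi] with t htE ht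
    have hlevel0 : m {a : ↥I | φ a = t} = 0 := by
      by_contra h0
      apply htE
      have hsub : {a : ↥I | φ a = t} ⊆ K :=
        fun a ha => subset_closure (fun h0' => (ne_of_gt ht) ((ha : φ a = t).symm.trans h0'))
      have hms : MeasurableSet {a : ↥I | φ a = t} := hφmeas (measurableSet_singleton t)
      have : μK {a : ↥I | φ a = t} = m {a : ↥I | φ a = t} := by
        rw [hμKdef, Measure.restrict_apply hms, Set.inter_eq_self_of_subset_left hsub]
      show 0 < μK {a : ↥I | φ a = t}
      rw [this]
      exact pos_iff_ne_zero.mpr h0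
    have heq : m {a : ↥I | t ≤ φ a} = m {a : ↥I | t < φ a} := by
      apply le_antisymm
      · calc m {a : ↥I | t ≤ φ a} ≤ m ({a : ↥I | t < φ a} ∪ {a : ↥I | φ a = t}) := by
              refine measure_mono (fun a ha => ?_)
              rcases lt_or_eq_of_le (show t ≤ φ a from ha) with h | h
              · exact Or.inl h
              · exact Or.inr h.symm
        _ ≤ m {a : ↥I | t < φ a} + m {a : ↥I | φ a = t} := measure_union_le _ _
        _ = m {a : ↥I | t < φ a} := by rw [hlevel0, add_zero]
      · exact measure_mono (fun a ha => show t ≤ φ a from le_of_lt ha)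
    refine tendsto_order.2 ⟨?_, ?_⟩
    · intro c hc
      exact (tendsto_add_atTop_nat N).eventually
        (lsc_open hreg hconv hIopen (hopen_level t) hc)
    · intro d hd
      have husc := usc_compact hreg hconv hIopen hIconn (hcomp_level t ht)
        (show m {a : ↥I | t ≤ φ a} < d from heq ▸ hd)
      exact ((tendsto_add_atTop_nat N).eventually husc).mono
        (fun n hn => lt_of_le_of_lt (measure_mono (fun a ha => show t ≤ φ a from le_of_lt ha)) hn)

end Stmt7Aux

open Stmt7Aux in
/-- Characterization of sequential convergence in `(M(I), ϑ)`:  `mₙ → m` if and only if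
(i) `mₙ(O) → ∞` for every open `O` meeting `e(m)`, and (ii) `∫ φ dmₙ → ∫ φ dm` for every
nonnegative continuous `φ` with compact support contained in `I \ e(m)`. -/
theorem stmt_7 (I : Set ℝ) (hIopen : IsOpen I) (hIconn : I.OrdConnected)
    (mseq : ℕ → MSpace I) (m : MSpace I) :
    Filter.Tendsto mseq Filter.atTop (𝓝 m) ↔
      ((∀ O : Set ↥I, IsOpen O → (O ∩ explosionSet I m.1).Nonempty →
          Filter.Tendsto (fun n => (mseq n).1 O) Filter.atTop (𝓝 (∞ : ℝ≥0∞))) ∧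
        (∀ φ : ↥I → ℝ, Continuous φ → (∀ y, 0 ≤ φ y) → HasCompactSupport φ →
          tsupport φ ⊆ (explosionSet I m.1)ᶜ →
          Filter.Tendsto (fun n => ∫⁻ y, ENNReal.ofReal (φ y) ∂(mseq n).1)
            Filter.atTop (𝓝 (∫⁻ y, ENNReal.ofReal (φ y) ∂m.1)))) := by
  constructor
  · intro hconv
    have hconv' : Tendsto (fun n => (mseq n).1) atTop (𝓝 m.1) :=
      (continuous_subtype_val.tendsto m).comp hconv
    exact ⟨fun O hO hne => forward_i m.2 hconv' hIopen hO hne,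
      fun φ hφc hφ0 hφcs hφsupp => forward_ii m.2 hconv' hIopen hIconn hφc hφ0 hφcs hφsupp⟩
  · rintro ⟨hi, hii⟩
    exact backward hIopen hIconn hi hii
end
end

section
/- Restricted to the subset of locally finite measures M_loc(I) ⊆ M(I), the topology ϑ coincides with the vague topology: a sequence (mₙ) of locally finite measures converges in ϑ to a locally finite measure m if and only if ∫ φ dmₙ → ∫ φ dm for every continuous compactly supported φ on I. -/
open MeasureTheory Set ENNReal Topology Filter TopologicalSpace

noncomputable section

/-- A measure on `I` is *locally finite* if every point has a neighborhood of
finite measure. -/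
def IsLocFiniteM (I : Set ℝ) (m : Measure ↥I) : Prop :=
  ∀ x : ↥I, ∃ ε : ℝ, 0 < ε ∧ m {y : ↥I | |(y : ℝ) - (x : ℝ)| < ε} < ∞

namespace Stmt9

variable {I : Set ℝ}

lemma isOpen_IooI (I : Set ℝ) (a b : ℝ) : IsOpen (IooI I a b) := by
  have : IooI I a b = (Subtype.val : ↥I → ℝ) ⁻¹' (Set.Ioo a b) := rfl
  rw [this]
  exact isOpen_Ioo.preimage continuous_subtype_val

lemma isClosed_IccI (I : Set ℝ) (a b : ℝ) : IsClosed (IccI I a b) := by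
  have : IccI I a b = (Subtype.val : ↥I → ℝ) ⁻¹' (Set.Icc a b) := rfl
  rw [this]
  exact isClosed_Icc.preimage continuous_subtype_val

lemma measurableSet_IooI (I : Set ℝ) (a b : ℝ) : MeasurableSet (IooI I a b) :=
  (isOpen_IooI I a b).measurableSet

lemma measurableSet_IccI (I : Set ℝ) (a b : ℝ) : MeasurableSet (IccI I a b) :=
  (isClosed_IccI I a b).measurableSet

lemma isCompact_IccI (hIconn : I.OrdConnected) {a b : ℝ} (ha : a ∈ I) (hb : b ∈ I) :
    IsCompact (IccI I a b) := by
  have hsub : Set.Icc a b ⊆ I := hIconn.out ha hb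
  let g : Set.Icc a b → ↥I := fun x => ⟨(x : ℝ), hsub x.2⟩
  have hg : Continuous g := Continuous.subtype_mk continuous_subtype_val _
  have : IccI I a b = Set.range g := by
    ext y
    constructor
    · rintro ⟨h1, h2⟩
      exact ⟨⟨(y : ℝ), ⟨h1, h2⟩⟩, rfl⟩
    · rintro ⟨x, rfl⟩
      exact ⟨x.2.1, x.2.2⟩
  rw [this]
  exact isCompact_range hg

lemma isLocallyFiniteMeasure_of (m : Measure ↥I) (hm : IsLocFiniteM I m) :
    IsLocallyFiniteMeasure m := by
  constructor
  intro x
  obtain ⟨ε, hε, hfin⟩ := hm x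
  refine ⟨{y : ↥I | |(y : ℝ) - (x : ℝ)| < ε}, ?_, hfin⟩
  have hopen : IsOpen {y : ↥I | |(y : ℝ) - (x : ℝ)| < ε} := by
    have : Continuous fun y : ↥I => |(y : ℝ) - (x : ℝ)| :=
      (continuous_subtype_val.sub continuous_const).abs
    exact isOpen_lt this continuous_const
  exact hopen.mem_nhds (by simp [hε])

lemma exists_bump (hIopen : IsOpen I) {K U : Set ↥I} (hK : IsCompact K) (hU : IsOpen U)
    (hKU : K ⊆ U) :
    ∃ φ : ↥I → ℝ, Continuous φ ∧ HasCompactSupport φ ∧ Set.EqOn φ 1 K ∧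
      (∀ y, φ y ∈ Set.Icc (0 : ℝ) 1) ∧ ∀ y, y ∉ U → φ y = 0 := by
  haveI : LocallyCompactSpace ↥I := hIopen.locallyCompactSpace
  obtain ⟨f, hf1, hf0, hfc, hf01⟩ :=
    exists_continuous_one_zero_of_isCompact hK hU.isClosed_compl
      (disjoint_compl_right_iff_subset.mpr hKU)
  exact ⟨f, f.continuous, hfc, hf1, hf01, fun y hy => hf0 hy⟩

lemma integrable_of_cont (m : Measure ↥I) (hm : IsLocFiniteM I m) {φ : ↥I → ℝ}
    (hφ : Continuous φ) (hφs : HasCompactSupport φ) : Integrable φ m := by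
  haveI := isLocallyFiniteMeasure_of m hm
  exact hφ.integrable_of_hasCompactSupport hφs


def genSet (I : Set ℝ) : Set (Set (Measure ↥I)) :=
  {U | ∃ (a b : ℚ) (c : ℝ≥0∞), (a : ℝ) ∈ I ∧ (b : ℝ) ∈ I ∧ (a : ℝ) < b ∧
      U = {m : Measure ↥I | c < m (IooI I a b)}} ∪
  {U | ∃ (a b : ℚ) (d : ℝ≥0∞), (a : ℝ) ∈ I ∧ (b : ℝ) ∈ I ∧ (a : ℝ) ≤ b ∧
      U = {m : Measure ↥I | m (IccI I a b) < d}}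

lemma tendsto_theta_iff {u : ℕ → Measure ↥I} {m : Measure ↥I} :
    Tendsto u atTop (𝓝 m) ↔ ∀ s ∈ genSet I, m ∈ s → ∀ᶠ n in atTop, u n ∈ s := by
  have hnhds : (𝓝 m : Filter (Measure ↥I)) =
      ⨅ s ∈ {s | m ∈ s ∧ s ∈ genSet I}, 𝓟 s := nhds_generateFrom
  rw [hnhds]
  simp only [tendsto_iInf, tendsto_principal, Set.mem_setOf_eq]
  constructor
  · intro h s hs hm
    exact h s ⟨hm, hs⟩
  · rintro h s ⟨hm, hs⟩
    exact h s hs hm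

/-- basic pointwise comparison: `ofReal ∘ φ ≤ indicator U 1` -/
lemma lintegral_ofReal_le_measure (μ : Measure ↥I) {φ : ↥I → ℝ} {U : Set ↥I}
    (hUm : MeasurableSet U) (h1 : ∀ y, φ y ≤ 1) (h0 : ∀ y, y ∉ U → φ y = 0) :
    ∫⁻ y, ENNReal.ofReal (φ y) ∂μ ≤ μ U := by
  have : ∀ y, ENNReal.ofReal (φ y) ≤ U.indicator 1 y := by
    intro y
    by_cases hy : y ∈ U
    · simp only [Set.indicator_of_mem hy, Pi.one_apply]
      calc ENNReal.ofReal (φ y) ≤ ENNReal.ofReal 1 := ENNReal.ofReal_le_ofReal (h1 y)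
        _ = 1 := ENNReal.ofReal_one
    · simp [Set.indicator_of_notMem hy, h0 y hy]
  calc ∫⁻ y, ENNReal.ofReal (φ y) ∂μ ≤ ∫⁻ y, U.indicator 1 y ∂μ := lintegral_mono this
    _ = μ U := lintegral_indicator_one hUm

lemma measure_le_lintegral_ofReal (μ : Measure ↥I) {φ : ↥I → ℝ} {K : Set ↥I}
    (hKm : MeasurableSet K) (h0 : ∀ y, 0 ≤ φ y) (h1 : Set.EqOn φ 1 K) :
    μ K ≤ ∫⁻ y, ENNReal.ofReal (φ y) ∂μ := by
  have : ∀ y, K.indicator 1 y ≤ ENNReal.ofReal (φ y) := by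
    intro y
    by_cases hy : y ∈ K
    · simp only [Set.indicator_of_mem hy, Pi.one_apply]
      have : φ y = 1 := h1 hy
      simp [this]
    · simp [Set.indicator_of_notMem hy]
  calc μ K = ∫⁻ y, K.indicator 1 y ∂μ := (lintegral_indicator_one hKm).symm
    _ ≤ ∫⁻ y, ENNReal.ofReal (φ y) ∂μ := lintegral_mono this

/-- The easy direction: vague convergence implies `ϑ`-convergence. -/
lemma tendsto_theta_of_integrals (hIopen : IsOpen I) (hIconn : I.OrdConnected)
    (u : ℕ → Measure ↥I) (m : Measure ↥I) (hreg : IsRegularM m)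
    (hu : ∀ n, IsLocFiniteM I (u n)) (hm : IsLocFiniteM I m)
    (hint : ∀ φ : ↥I → ℝ, Continuous φ → HasCompactSupport φ →
      Tendsto (fun n => ∫ y, φ y ∂(u n)) atTop (𝓝 (∫ y, φ y ∂m))) :
    Tendsto u atTop (𝓝 m) := by
  rw [tendsto_theta_iff]
  rintro s (⟨a, b, c, ha, hb, hab, rfl⟩ | ⟨a, b, d, ha, hb, hab, rfl⟩) hms
  · -- open interval case
    simp only [Set.mem_setOf_eq] at hms ⊢
    -- inner regularity
    have h2 := hreg.2 (IooI I a b) (measurableSet_IooI I a b)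
    rw [h2] at hms
    obtain ⟨K, ⟨hKcomp, hKsub⟩, hcK⟩ : ∃ K, (IsCompact K ∧ K ⊆ IooI I a b) ∧ c < m K := by
      obtain ⟨K, hK⟩ := lt_iSup_iff.mp hms
      obtain ⟨hKP, hcK⟩ := lt_iSup_iff.mp hK
      exact ⟨K, hKP, hcK⟩
    obtain ⟨φ, hφc, hφs, hφ1, hφ01, hφ0⟩ :=
      exists_bump hIopen hKcomp (isOpen_IooI I a b) hKsub
    have hφnn : ∀ y, 0 ≤ φ y := fun y => (hφ01 y).1
    have key1 : c < ∫⁻ y, ENNReal.ofReal (φ y) ∂m :=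
      lt_of_lt_of_le hcK (measure_le_lintegral_ofReal m
        (hKcomp.isClosed.measurableSet) hφnn hφ1)
    have key2 : ∀ n, ∫⁻ y, ENNReal.ofReal (φ y) ∂(u n) ≤ u n (IooI I a b) := fun n =>
      lintegral_ofReal_le_measure (u n) (measurableSet_IooI I a b)
        (fun y => (hφ01 y).2) hφ0
    have heq : ∀ (μ : Measure ↥I), IsLocFiniteM I μ →
        ENNReal.ofReal (∫ y, φ y ∂μ) = ∫⁻ y, ENNReal.ofReal (φ y) ∂μ := fun μ hμ =>
      ofReal_integral_eq_lintegral_ofReal (integrable_of_cont μ hμ hφc hφs)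
        (Filter.Eventually.of_forall hφnn)
    have htd : Tendsto (fun n => ∫⁻ y, ENNReal.ofReal (φ y) ∂(u n)) atTop
        (𝓝 (∫⁻ y, ENNReal.ofReal (φ y) ∂m)) := by
      have := (ENNReal.continuous_ofReal.tendsto _).comp (hint φ hφc hφs)
      rw [show (ENNReal.ofReal (∫ y, φ y ∂m)) = ∫⁻ y, ENNReal.ofReal (φ y) ∂m from
        heq m hm] at this
      convert this using 1
      ext n
      exact (heq (u n) (hu n)).symm
    have := htd.eventually (lt_mem_nhds key1)
    filter_upwards [this] with n hn
    exact lt_of_lt_of_le hn (key2 n)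
  · -- closed interval case
    simp only [Set.mem_setOf_eq] at hms ⊢
    have h1 := hreg.1 (IccI I a b) (measurableSet_IccI I a b)
    rw [h1] at hms
    obtain ⟨U, ⟨hUopen, hUsub⟩, hUd⟩ : ∃ U, (IsOpen U ∧ IccI I a b ⊆ U) ∧ m U < d := by
      obtain ⟨U, hU⟩ := iInf_lt_iff.mp hms
      obtain ⟨hUP, hUd⟩ := iInf_lt_iff.mp hU
      exact ⟨U, hUP, hUd⟩
    obtain ⟨φ, hφc, hφs, hφ1, hφ01, hφ0⟩ :=
      exists_bump hIopen (isCompact_IccI hIconn ha hb) hUopen hUsub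
    have hφnn : ∀ y, 0 ≤ φ y := fun y => (hφ01 y).1
    have key1 : ∀ n, u n (IccI I a b) ≤ ∫⁻ y, ENNReal.ofReal (φ y) ∂(u n) := fun n =>
      measure_le_lintegral_ofReal (u n) (measurableSet_IccI I a b) hφnn hφ1
    have key2 : ∫⁻ y, ENNReal.ofReal (φ y) ∂m < d :=
      lt_of_le_of_lt (lintegral_ofReal_le_measure m hUopen.measurableSet
        (fun y => (hφ01 y).2) hφ0) hUd
    have heq : ∀ (μ : Measure ↥I), IsLocFiniteM I μ →
        ENNReal.ofReal (∫ y, φ y ∂μ) = ∫⁻ y, ENNReal.ofReal (φ y) ∂μ := fun μ hμ =>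
      ofReal_integral_eq_lintegral_ofReal (integrable_of_cont μ hμ hφc hφs)
        (Filter.Eventually.of_forall hφnn)
    have htd : Tendsto (fun n => ∫⁻ y, ENNReal.ofReal (φ y) ∂(u n)) atTop
        (𝓝 (∫⁻ y, ENNReal.ofReal (φ y) ∂m)) := by
      have := (ENNReal.continuous_ofReal.tendsto _).comp (hint φ hφc hφs)
      rw [show (ENNReal.ofReal (∫ y, φ y ∂m)) = ∫⁻ y, ENNReal.ofReal (φ y) ∂m from
        heq m hm] at this
      convert this using 1
      ext n
      exact (heq (u n) (hu n)).symm
    have := htd.eventually (gt_mem_nhds key2)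
    filter_upwards [this] with n hn
    exact lt_of_le_of_lt (key1 n) hn


lemma exists_bracket (t : ℕ → ℝ) :
    ∀ N y, 0 < N → t 0 ≤ y → y ≤ t N → ∃ i, i < N ∧ t i ≤ y ∧ y ≤ t (i + 1) := by
  intro N
  induction N with
  | zero => intro y h; omega
  | succ N ih =>
    intro y _ h0 hN
    by_cases hN0 : N = 0
    · subst hN0; exact ⟨0, by omega, h0, hN⟩
    · by_cases hy : y ≤ t N
      · obtain ⟨i, hi, h⟩ := ih y (by omega) h0 hy
        exact ⟨i, by omega, h⟩
      · exact ⟨N, by omega, (le_of_not_ge hy), hN⟩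

lemma exists_bracket_strict (t : ℕ → ℝ) (N : ℕ) (y : ℝ) (hN : 0 < N)
    (h0 : t 0 ≤ y) (hNy : y ≤ t N) (hne : ∀ i ≤ N, y ≠ t i) :
    ∃ i, i < N ∧ t i < y ∧ y < t (i + 1) := by
  obtain ⟨i, hi, h1, h2⟩ := exists_bracket t N y hN h0 hNy
  exact ⟨i, hi, lt_of_le_of_ne h1 (Ne.symm (hne i (by omega))),
    lt_of_le_of_ne h2 (hne (i + 1) (by omega))⟩

lemma heavy_finite (μ : Measure ↥I) (F : Set ↥I) (hF : μ F ≠ ∞) {η : ℝ≥0∞} (hη : η ≠ 0) :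
    {x : ↥I | x ∈ F ∧ η ≤ μ {x}}.Finite := by
  by_contra hinf
  have htop : μ {x : ↥I | x ∈ F ∧ η ≤ μ {x}} = ∞ :=
    Set.Infinite.meas_eq_top hinf ⟨η, hη, fun x hx => hx.2⟩
  have hle : μ {x : ↥I | x ∈ F ∧ η ≤ μ {x}} ≤ μ F :=
    measure_mono fun x hx => hx.1
  rw [htop] at hle
  exact hF (top_le_iff.mp hle)

lemma IccI_self_eq_singleton {q : ℝ} (hq : q ∈ I) :
    IccI I q q = {(⟨q, hq⟩ : ↥I)} := by
  ext y
  simp only [IccI, Set.mem_setOf_eq, Set.mem_singleton_iff]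
  constructor
  · rintro ⟨h1, h2⟩
    exact Subtype.ext (le_antisymm h2 h1)
  · rintro rfl; exact ⟨le_rfl, le_rfl⟩

lemma infinite_rat_Ioo {lo hi : ℝ} (h : lo < hi) :
    {q : ℚ | lo < (q : ℝ) ∧ (q : ℝ) < hi}.Infinite := by
  obtain ⟨p, hp1, hp2⟩ := exists_rat_btwn h
  obtain ⟨r, hr1, hr2⟩ := exists_rat_btwn hp2
  have hpr : p < r := by exact_mod_cast hr1
  refine (Set.Ioo_infinite hpr).mono ?_
  rintro q ⟨h1, h2⟩
  exact ⟨lt_trans hp1 (by exact_mod_cast h1), lt_trans (by exact_mod_cast h2) hr2⟩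

/-- Partition construction. -/
lemma exists_partition (hIconn : I.OrdConnected) (m : Measure ↥I)
    {A B : ℚ} (hA : (A : ℝ) ∈ I) (hB : (B : ℝ) ∈ I)
    {α β δ : ℝ} (hAα : (A : ℝ) < α) (hαβ : α ≤ β) (hβB : β < (B : ℝ)) (hδ : 0 < δ)
    {η : ℕ → ℝ≥0∞} (hη : ∀ n, η n ≠ 0) (hfin : m (IccI I A B) ≠ ∞) :
    ∃ (N : ℕ) (t : ℕ → ℚ), 0 < N ∧
      (∀ i ≤ N, (t i : ℝ) ∈ I) ∧
      (∀ i, i < N → (t i : ℝ) < t (i + 1)) ∧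
      (∀ i, i < N → (t (i + 1) : ℝ) - t i < δ) ∧
      (A : ℝ) < t 0 ∧ (t 0 : ℝ) < α ∧ β < (t N : ℝ) ∧ (t N : ℝ) < B ∧
      (∀ i ≤ N, m (IccI I (t i) (t i)) ≤ η N) := by
  have hAB : (A : ℝ) < B := lt_trans hAα (lt_of_le_of_lt hαβ hβB)
  set ρ : ℝ := min (δ / 2) (min (α - (A : ℝ)) ((B : ℝ) - β)) with hρdef
  have hρ : 0 < ρ := by
    apply lt_min (by linarith)
    exact lt_min (by linarith) (by linarith)
  obtain ⟨N, hN⟩ := exists_nat_gt (((B : ℝ) - A) / ρ)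
  set d : ℝ := ((B : ℝ) - A) / (N + 1) with hddef
  have hNpos : (0 : ℝ) < (N : ℝ) + 1 := by positivity
  have hd : 0 < d := div_pos (by linarith) hNpos
  have hdρ : d < ρ := by
    rw [hddef, div_lt_iff₀ hNpos]
    have h1 : ((B : ℝ) - A) / ρ < (N : ℝ) + 1 := by
      calc ((B : ℝ) - A) / ρ < N := hN
        _ ≤ (N : ℝ) + 1 := by linarith
    calc (B : ℝ) - A = (((B : ℝ) - A) / ρ) * ρ := by field_simp
      _ < ((N : ℝ) + 1) * ρ := mul_lt_mul_of_pos_right h1 hρ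
      _ = ρ * ((N : ℝ) + 1) := by ring
  have hdδ : d < δ / 2 := lt_of_lt_of_le hdρ (min_le_left _ _)
  have hdα : d < α - A := lt_of_lt_of_le hdρ ((min_le_right _ _).trans (min_le_left _ _))
  have hdB : d < (B : ℝ) - β := lt_of_lt_of_le hdρ ((min_le_right _ _).trans (min_le_right _ _))
  have hIccsub : Set.Icc (A : ℝ) (B : ℝ) ⊆ I := hIconn.out hA hB
  have hNd : (A : ℝ) + ((N : ℝ) + 1) * d = B := by
    rw [hddef]; field_simp; ring
  have hNposn : 0 < N := by
    by_contra hc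
    push_neg at hc
    interval_cases N
    · simp only [Nat.cast_zero] at hN
      have : 0 < ((B : ℝ) - A) / ρ := div_pos (by linarith) hρ
      linarith
  -- helper: slot bounds within [A, B]
  have hup : ∀ i : ℕ, i ≤ N → (A : ℝ) + i * d + d / 2 ≤ B := by
    intro i hi
    have hiN : (i : ℝ) ≤ N := by exact_mod_cast hi
    nlinarith
  have hlo : ∀ i : ℕ, (A : ℝ) ≤ (A : ℝ) + i * d := by
    intro i
    have : (0 : ℝ) ≤ (i : ℝ) * d := by positivity
    linarith
  have hpick : ∀ i : ℕ, ∃ q : ℚ,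
      ((A : ℝ) + i * d < q ∧ (q : ℝ) < (A : ℝ) + i * d + d / 2) ∧
      (i ≤ N → m (IccI I (q : ℝ) (q : ℝ)) ≤ η N) := by
    intro i
    have hlohi : (A : ℝ) + i * d < (A : ℝ) + i * d + d / 2 := by linarith
    have hQ := infinite_rat_Ioo hlohi
    by_cases hiN : i ≤ N
    · have hheavy := heavy_finite m (IccI I A B) hfin (hη N)
      set Bad : Set ℚ := {q : ℚ | (A : ℝ) + i * d < (q : ℝ) ∧ (q : ℝ) < (A : ℝ) + i * d + d / 2 ∧
          ¬ m (IccI I (q : ℝ) (q : ℝ)) ≤ η N} with hBaddef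
      have hBadfin : Bad.Finite := by
        have himg : ((fun x : ↥I => (x : ℝ)) '' {x : ↥I | x ∈ IccI I A B ∧ η N ≤ m {x}}).Finite :=
          hheavy.image _
        have hpre : ((fun q : ℚ => (q : ℝ)) ⁻¹'
            ((fun x : ↥I => (x : ℝ)) '' {x : ↥I | x ∈ IccI I A B ∧ η N ≤ m {x}})).Finite := by
          apply Set.Finite.preimage _ himg
          intro a _ b _ hab
          have : (a : ℝ) = b := hab
          exact_mod_cast this
        refine hpre.subset ?_
        rintro q ⟨h1, h2, h3⟩
        have hqI : (q : ℝ) ∈ I := by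
          apply hIccsub
          exact ⟨le_of_lt (lt_of_le_of_lt (hlo i) h1),
            le_of_lt (lt_of_lt_of_le h2 (hup i hiN))⟩
        refine ⟨⟨(q : ℝ), hqI⟩, ⟨⟨?_, ?_⟩, ?_⟩, rfl⟩
        · exact le_of_lt (lt_of_le_of_lt (hlo i) h1)
        · exact le_of_lt (lt_of_lt_of_le h2 (hup i hiN))
        · rw [IccI_self_eq_singleton hqI] at h3
          exact le_of_not_ge h3
      have hne : ({q : ℚ | (A : ℝ) + i * d < (q : ℝ) ∧ (q : ℝ) < (A : ℝ) + i * d + d / 2}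
          \ Bad).Nonempty := Set.Infinite.nonempty (hQ.diff hBadfin)
      obtain ⟨q, ⟨hq1, hq2⟩, hqBad⟩ := hne
      refine ⟨q, ⟨hq1, hq2⟩, fun _ => ?_⟩
      by_contra hcon
      exact hqBad ⟨hq1, hq2, hcon⟩
    · obtain ⟨q, hq1, hq2⟩ := Set.Infinite.nonempty hQ
      exact ⟨q, ⟨hq1, hq2⟩, fun h => absurd h hiN⟩
  choose t ht using hpick
  have htlo : ∀ i : ℕ, (A : ℝ) + i * d < t i := fun i => (ht i).1.1
  have hthi : ∀ i : ℕ, (t i : ℝ) < (A : ℝ) + i * d + d / 2 := fun i => (ht i).1.2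
  have hmemI : ∀ i ≤ N, (t i : ℝ) ∈ I := by
    intro i hi
    apply hIccsub
    exact ⟨le_of_lt (lt_of_le_of_lt (hlo i) (htlo i)),
      le_of_lt (lt_of_lt_of_le (hthi i) (hup i hi))⟩
  refine ⟨N, t, hNposn, hmemI, ?_, ?_, ?_, ?_, ?_, ?_, fun i hi => (ht i).2 hi⟩
  · intro i _
    have h1 := hthi i
    have h2 := htlo (i + 1)
    have hcast : ((i + 1 : ℕ) : ℝ) = (i : ℝ) + 1 := by push_cast; ring
    rw [hcast] at h2
    nlinarith
  · intro i _
    have h1 := htlo i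
    have h2 := hthi (i + 1)
    have hcast : ((i + 1 : ℕ) : ℝ) = (i : ℝ) + 1 := by push_cast; ring
    rw [hcast] at h2
    nlinarith
  · have := htlo 0
    simpa using this
  · have := hthi 0
    simp only [Nat.cast_zero, zero_mul, add_zero] at this
    linarith
  · have h1 := htlo N
    nlinarith
  · have h1 := hthi N
    nlinarith
  

lemma mono_of_step (f : ℕ → ℝ) (N : ℕ) (h : ∀ i, i < N → f i < f (i + 1)) :
    ∀ i j, i ≤ j → j ≤ N → f i ≤ f j := by
  intro i j hij hjN
  induction j with
  | zero =>
    have : i = 0 := by omega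
    subst this; exact le_rfl
  | succ j ih =>
    rcases Nat.eq_or_lt_of_le hij with rfl | h'
    · exact le_rfl
    · have hij' : i ≤ j := by omega
      exact le_trans (ih hij' (by omega)) (le_of_lt (h j (by omega)))

lemma exists_eps_add_lt {b L : ℝ≥0∞} (hbL : b < L) (hL : L ≠ ∞) {D : ℝ} (hD : 0 ≤ D) :
    ∃ ε : ℝ, 0 < ε ∧ ε ≤ 1 ∧ b + ENNReal.ofReal (ε * D) < L := by
  have hb : b ≠ ∞ := ne_top_of_lt hbL
  have hblt : b.toReal < L.toReal := (ENNReal.toReal_lt_toReal hb hL).mpr hbL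
  set ε : ℝ := min 1 ((L.toReal - b.toReal) / (2 * (D + 1))) with hεdef
  have hε : 0 < ε := lt_min one_pos (div_pos (by linarith) (by positivity))
  refine ⟨ε, hε, min_le_left _ _, ?_⟩
  have hεD : ε * D ≤ (L.toReal - b.toReal) / 2 := by
    calc ε * D ≤ ((L.toReal - b.toReal) / (2 * (D + 1))) * D :=
          mul_le_mul_of_nonneg_right (min_le_right _ _) hD
      _ ≤ (L.toReal - b.toReal) / 2 := by
          rw [div_mul_eq_mul_div, div_le_div_iff₀ (by positivity) (by norm_num)]
          nlinarith
  have hLpos : 0 < L.toReal := lt_of_le_of_lt ENNReal.toReal_nonneg hblt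
  calc b + ENNReal.ofReal (ε * D) = ENNReal.ofReal (b.toReal + ε * D) := by
        rw [ENNReal.ofReal_add ENNReal.toReal_nonneg (by positivity), ENNReal.ofReal_toReal hb]
    _ < ENNReal.ofReal L.toReal := by
        rw [ENNReal.ofReal_lt_ofReal_iff hLpos]
        linarith
    _ = L := ENNReal.ofReal_toReal hL


lemma sum_mul_add_le {N : ℕ} (a b b' : ℕ → ℝ≥0∞) (γ K : ℝ≥0∞)
    (ha : ∀ i ∈ Finset.range N, a i ≤ K) (hb : ∀ i ∈ Finset.range N, b i ≤ b' i + γ) :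
    ∑ i ∈ Finset.range N, a i * b i ≤
      (∑ i ∈ Finset.range N, a i * b' i) + (N : ℝ≥0∞) * (K * γ) := by
  calc ∑ i ∈ Finset.range N, a i * b i
      ≤ ∑ i ∈ Finset.range N, (a i * b' i + K * γ) := by
        apply Finset.sum_le_sum
        intro i hi
        calc a i * b i ≤ a i * (b' i + γ) := mul_le_mul_right (hb i hi) _
          _ = a i * b' i + a i * γ := mul_add _ _ _
          _ ≤ a i * b' i + K * γ := add_le_add le_rfl (mul_le_mul_left (ha i hi) γ)
    _ = (∑ i ∈ Finset.range N, a i * b' i) + (N : ℝ≥0∞) * (K * γ) := by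
        rw [Finset.sum_add_distrib, Finset.sum_const, Finset.card_range, nsmul_eq_mul]

set_option maxHeartbeats 1000000 in
/-- The key lemma: `ϑ`-convergence data implies convergence of `∫⁻ ofReal ∘ φ` for
continuous nonneg compactly supported `φ`. -/
lemma key_lintegral_tendsto (hIopen : IsOpen I) (hIconn : I.OrdConnected)
    (u : ℕ → Measure ↥I) (m : Measure ↥I)
    (hm : IsLocFiniteM I m)
    (hIoo : ∀ (a b : ℚ), (a : ℝ) ∈ I → (b : ℝ) ∈ I → (a : ℝ) < b → ∀ c : ℝ≥0∞,
      c < m (IooI I a b) → ∀ᶠ n in atTop, c < u n (IooI I a b))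
    (hIcc : ∀ (a b : ℚ), (a : ℝ) ∈ I → (b : ℝ) ∈ I → (a : ℝ) ≤ b → ∀ d : ℝ≥0∞,
      m (IccI I a b) < d → ∀ᶠ n in atTop, u n (IccI I a b) < d)
    {φ : ↥I → ℝ} (hφc : Continuous φ) (hφs : HasCompactSupport φ) (hφ0 : ∀ y, 0 ≤ φ y) :
    Tendsto (fun n => ∫⁻ y, ENNReal.ofReal (φ y) ∂(u n)) atTop
      (𝓝 (∫⁻ y, ENNReal.ofReal (φ y) ∂m)) := by
  classical
  by_cases hK0 : tsupport φ = ∅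
  · have hz : ∀ y, φ y = 0 := fun y =>
      image_eq_zero_of_notMem_tsupport (by simp [hK0])
    simp only [hz, ENNReal.ofReal_zero, lintegral_zero]
    exact tendsto_const_nhds
  have hKne : (tsupport φ).Nonempty := Set.nonempty_iff_ne_empty.mpr hK0
  obtain ⟨x₀, hx₀⟩ := hKne
  have hKcomp : IsCompact (tsupport φ) := hφs
  set Kr : Set ℝ := Subtype.val '' tsupport φ with hKrdef
  have hKrcomp : IsCompact Kr := hKcomp.image continuous_subtype_val
  have hKrne : Kr.Nonempty := ⟨(x₀ : ℝ), x₀, hx₀, rfl⟩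
  set α : ℝ := sInf Kr with hαdef
  set β : ℝ := sSup Kr with hβdef
  have hαmem : α ∈ Kr := hKrcomp.sInf_mem hKrne
  have hβmem : β ∈ Kr := hKrcomp.sSup_mem hKrne
  have hαI : α ∈ I := by
    obtain ⟨x, _, hxeq⟩ := hαmem
    rw [← hxeq]; exact x.2
  have hβI : β ∈ I := by
    obtain ⟨x, _, hxeq⟩ := hβmem
    rw [← hxeq]; exact x.2
  have hαβ : α ≤ β := le_csSup hKrcomp.bddAbove hαmem
  have hαle : ∀ x, x ∈ tsupport φ → α ≤ (x : ℝ) := fun x hx =>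
    csInf_le hKrcomp.bddBelow ⟨x, hx, rfl⟩
  have hβge : ∀ x, x ∈ tsupport φ → (x : ℝ) ≤ β := fun x hx =>
    le_csSup hKrcomp.bddAbove ⟨x, hx, rfl⟩
  obtain ⟨εα, hεα, hballα⟩ := Metric.isOpen_iff.mp hIopen α hαI
  obtain ⟨A, hA1, hA2⟩ := exists_rat_btwn (show α - εα < α by linarith)
  have hAI : (A : ℝ) ∈ I := by
    apply hballα
    rw [Metric.mem_ball, Real.dist_eq, abs_lt]
    constructor <;> linarith
  obtain ⟨εβ, hεβ, hballβ⟩ := Metric.isOpen_iff.mp hIopen β hβI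
  obtain ⟨B, hB1, hB2⟩ := exists_rat_btwn (show β < β + εβ by linarith)
  have hBI : (B : ℝ) ∈ I := by
    apply hballβ
    rw [Metric.mem_ball, Real.dist_eq, abs_lt]
    constructor <;> linarith
  have hAα : (A : ℝ) < α := hA2
  have hβB : β < (B : ℝ) := hB1
  haveI hmLF := isLocallyFiniteMeasure_of m hm
  have hM : m (IccI I A B) ≠ ∞ := ((isCompact_IccI hIconn hAI hBI).measure_lt_top).ne
  set M' : ℝ := (m (IccI I A B)).toReal with hM'def
  have hM'0 : 0 ≤ M' := ENNReal.toReal_nonneg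
  have hMeq : m (IccI I A B) = ENNReal.ofReal M' := (ENNReal.ofReal_toReal hM).symm
  obtain ⟨xm, hxmK, hxmMax⟩ := hKcomp.exists_isMaxOn ⟨x₀, hx₀⟩ hφc.continuousOn
  set C : ℝ := max (φ xm) 0 with hCdef
  have hC0 : 0 ≤ C := le_max_right _ _
  have hφC : ∀ y, φ y ≤ C := by
    intro y
    by_cases hy : y ∈ tsupport φ
    · exact le_trans (hxmMax hy) (le_max_left _ _)
    · rw [image_eq_zero_of_notMem_tsupport hy]; exact hC0
  have hKsub : tsupport φ ⊆ IccI I A B := fun x hx =>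
    ⟨le_of_lt (lt_of_lt_of_le hAα (hαle x hx)), le_of_lt (lt_of_le_of_lt (hβge x hx) hβB)⟩
  set L : ℝ≥0∞ := ∫⁻ y, ENNReal.ofReal (φ y) ∂m with hLdef
  have hLle : L ≤ ENNReal.ofReal C * m (IccI I A B) := by
    rw [hLdef]
    calc ∫⁻ y, ENNReal.ofReal (φ y) ∂m
        ≤ ∫⁻ y, (IccI I A B).indicator (fun _ => ENNReal.ofReal C) y ∂m := by
          apply lintegral_mono
          intro y
          by_cases hy : y ∈ IccI I A B
          · rw [Set.indicator_of_mem hy]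
            exact ENNReal.ofReal_le_ofReal (hφC y)
          · have h0 : φ y = 0 := image_eq_zero_of_notMem_tsupport (fun hc => hy (hKsub hc))
            simp [Set.indicator_of_notMem hy, h0]
      _ = ENNReal.ofReal C * m (IccI I A B) :=
          lintegral_indicator_const (measurableSet_IccI I A B) _
  have hLne : L ≠ ∞ := ne_top_of_le_ne_top
    (ENNReal.mul_ne_top ENNReal.ofReal_ne_top hM) hLle
  set D : ℝ := 2 * M' + 2 * C + 3 with hDdef
  have hD0 : 0 ≤ D := by positivity
  have claim : ∀ ε : ℝ, 0 < ε → ε ≤ 1 → ∀ᶠ n in atTop,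
      L ≤ (∫⁻ y, ENNReal.ofReal (φ y) ∂(u n)) + ENNReal.ofReal (ε * D) ∧
      (∫⁻ y, ENNReal.ofReal (φ y) ∂(u n)) ≤ L + ENNReal.ofReal (ε * D) := by
    intro ε hε0 hε1
    have hφu : UniformContinuous φ := hφs.uniformContinuous_of_continuous hφc
    obtain ⟨δ, hδ0, hδprop⟩ := Metric.uniformContinuous_iff.mp hφu ε hε0
    obtain ⟨N, t, hNpos, hmemI, hstep, hspace, hAt0, ht0α, hβtN, htNB, hatom⟩ :=
      exists_partition hIconn m hAI hBI hAα hαβ hβB hδ0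
        (η := fun n => ENNReal.ofReal (ε / ((n : ℝ) + 1)))
        (fun n => (ENNReal.ofReal_pos.mpr (by positivity)).ne') hM
    have hmono : ∀ i j, i ≤ j → j ≤ N → (t i : ℝ) ≤ t j :=
      mono_of_step (fun i => (t i : ℝ)) N hstep
    have hAti : ∀ i, i ≤ N → (A : ℝ) < t i := fun i hi =>
      lt_of_lt_of_le hAt0 (hmono 0 i (Nat.zero_le _) hi)
    have htiB : ∀ i, i ≤ N → (t i : ℝ) < B := fun i hi =>
      lt_of_le_of_lt (hmono i N hi le_rfl) htNB
    have hgex : ∀ i : ℕ, ∃ z : ↥I, i ≤ N → (z : ℝ) = t i := by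
      intro i
      by_cases h : i ≤ N
      · exact ⟨⟨t i, hmemI i h⟩, fun _ => rfl⟩
      · exact ⟨x₀, fun hc => absurd hc h⟩
    choose g hg using hgex
    set c : ℕ → ℝ := fun i => φ (g i) with hcdef
    have hc0 : ∀ i, 0 ≤ c i := fun i => hφ0 _
    have hcC : ∀ i, c i ≤ C := fun i => hφC _
    have hφclose : ∀ i, i < N → ∀ y : ↥I, (t i : ℝ) ≤ (y : ℝ) → (y : ℝ) ≤ t (i + 1) →
        |φ y - c i| < ε := by
      intro i hiN y h1 h2
      have hd : dist y (g i) < δ := by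
        rw [Subtype.dist_eq, hg i (le_of_lt hiN), Real.dist_eq, abs_lt]
        have := hspace i hiN
        constructor <;> linarith
      have := hδprop hd
      rwa [Real.dist_eq] at this
    have hPioPcc : ∀ i, IooI I (t i) (t (i+1)) ⊆ IccI I (t i) (t (i+1)) := by
      rintro i y ⟨h1, h2⟩; exact ⟨le_of_lt h1, le_of_lt h2⟩
    have hPccAB : ∀ i, i < N → IccI I (t i) (t (i+1)) ⊆ IccI I A B := by
      rintro i hi y ⟨h1, h2⟩
      exact ⟨le_of_lt (lt_of_lt_of_le (hAti i (by omega)) h1),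
        le_of_lt (lt_of_le_of_lt h2 (htiB (i+1) (by omega)))⟩
    have hT0TNAB : IccI I (t 0) (t N) ⊆ IccI I A B := by
      rintro y ⟨h1, h2⟩
      exact ⟨le_of_lt (lt_of_lt_of_le (hAti 0 (Nat.zero_le _)) h1),
        le_of_lt (lt_of_le_of_lt h2 (htiB N le_rfl))⟩
    have hKsub2 : tsupport φ ⊆ IccI I (t 0) (t N) := fun x hx =>
      ⟨le_of_lt (lt_of_lt_of_le ht0α (hαle x hx)),
       le_of_lt (lt_of_le_of_lt (hβge x hx) hβtN)⟩
    have hmeasInd : ∀ (s : Set ↥I), MeasurableSet s → ∀ (k : ℝ≥0∞),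
        Measurable (s.indicator (fun _ => k)) := fun s hs k => measurable_const.indicator hs
    have hsumIoo : ∀ (μ : Measure ↥I) (w : ℕ → ℝ),
        ∫⁻ y, (∑ i ∈ Finset.range N,
            (IooI I (t i) (t (i+1))).indicator (fun _ => ENNReal.ofReal (w i)) y) ∂μ
          = ∑ i ∈ Finset.range N, ENNReal.ofReal (w i) * μ (IooI I (t i) (t (i+1))) := by
      intro μ w
      rw [lintegral_finset_sum _ (fun i _ => hmeasInd _ (measurableSet_IooI I _ _) _)]
      exact Finset.sum_congr rfl fun i _ =>
        lintegral_indicator_const (measurableSet_IooI I _ _) _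
    have hsumIcc : ∀ (μ : Measure ↥I) (w : ℕ → ℝ),
        ∫⁻ y, (∑ i ∈ Finset.range N,
            (IccI I (t i) (t (i+1))).indicator (fun _ => ENNReal.ofReal (w i)) y) ∂μ
          = ∑ i ∈ Finset.range N, ENNReal.ofReal (w i) * μ (IccI I (t i) (t (i+1))) := by
      intro μ w
      rw [lintegral_finset_sum _ (fun i _ => hmeasInd _ (measurableSet_IccI I _ _) _)]
      exact Finset.sum_congr rfl fun i _ =>
        lintegral_indicator_const (measurableSet_IccI I _ _) _
    have hsumAt : ∫⁻ y, (∑ i ∈ Finset.range (N+1),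
            (IccI I (t i) (t i)).indicator (fun _ => ENNReal.ofReal (c i)) y) ∂m
          = ∑ i ∈ Finset.range (N+1), ENNReal.ofReal (c i) * m (IccI I (t i) (t i)) := by
      rw [lintegral_finset_sum _ (fun i _ => hmeasInd _ (measurableSet_IccI I _ _) _)]
      exact Finset.sum_congr rfl fun i _ =>
        lintegral_indicator_const (measurableSet_IccI I _ _) _
    -- pointwise bounds
    have hL1pt : ∀ (y : ↥I), (∑ i ∈ Finset.range N,
        (IooI I (t i) (t (i+1))).indicator (fun _ => ENNReal.ofReal (c i - ε)) y)
          ≤ ENNReal.ofReal (φ y) := by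
      intro y
      by_cases hy : ∃ i, i ∈ Finset.range N ∧ y ∈ IooI I (t i) (t (i+1))
      · obtain ⟨i, hiF, hyi⟩ := hy
        have hiN : i < N := Finset.mem_range.mp hiF
        rw [Finset.sum_eq_single_of_mem i hiF]
        · rw [Set.indicator_of_mem hyi]
          apply ENNReal.ofReal_le_ofReal
          have := hφclose i hiN y (le_of_lt hyi.1) (le_of_lt hyi.2)
          rw [abs_lt] at this
          linarith [this.2]
        · intro j hjF hji
          apply Set.indicator_of_notMem
          intro hyj
          have hjN : j < N := Finset.mem_range.mp hjF
          rcases lt_or_gt_of_ne hji with h | h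
          · have hle : (t (j+1) : ℝ) ≤ t i := hmono (j+1) i (by omega) (by omega)
            have h1 := hyj.2; have h2 := hyi.1
            linarith
          · have hle : (t (i+1) : ℝ) ≤ t j := hmono (i+1) j (by omega)
              (by omega)
            have h1 := hyi.2; have h2 := hyj.1
            linarith
      · push_neg at hy
        rw [Finset.sum_eq_zero fun j hj => Set.indicator_of_notMem (hy j hj) _]
        exact zero_le
    have hL2pt : ∀ (μ : Measure ↥I), ∀ (y : ↥I), ENNReal.ofReal (φ y) ≤ ∑ i ∈ Finset.range N,
        (IccI I (t i) (t (i+1))).indicator (fun _ => ENNReal.ofReal (c i + ε)) y := by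
      intro μ y
      by_cases hy : y ∈ IccI I (t 0) (t N)
      · obtain ⟨i, hiN, h1, h2⟩ := exists_bracket (fun i => (t i : ℝ)) N (y : ℝ) hNpos hy.1 hy.2
        have hymem : y ∈ IccI I (t i) (t (i+1)) := ⟨h1, h2⟩
        refine le_trans ?_ (Finset.single_le_sum
          (f := fun i => (IccI I (t i) (t (i+1))).indicator (fun _ => ENNReal.ofReal (c i + ε)) y)
          (fun j _ => zero_le) (Finset.mem_range.mpr hiN))
        show ENNReal.ofReal (φ y)
          ≤ (IccI I (t i) (t (i+1))).indicator (fun _ => ENNReal.ofReal (c i + ε)) y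
        rw [Set.indicator_of_mem hymem]
        apply ENNReal.ofReal_le_ofReal
        have := hφclose i hiN y h1 h2
        rw [abs_lt] at this
        linarith [this.1]
      · have h0 : φ y = 0 := image_eq_zero_of_notMem_tsupport (fun hc => hy (hKsub2 hc))
        simp [h0]
    have hL3pt : ∀ (y : ↥I), ENNReal.ofReal (φ y) ≤
        (∑ i ∈ Finset.range N,
          (IooI I (t i) (t (i+1))).indicator (fun _ => ENNReal.ofReal (c i - ε)) y)
        + (IccI I (t 0) (t N)).indicator (fun _ => ENNReal.ofReal (2 * ε)) y
        + (∑ i ∈ Finset.range (N+1),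
          (IccI I (t i) (t i)).indicator (fun _ => ENNReal.ofReal (c i)) y) := by
      intro y
      by_cases hy : y ∈ IccI I (t 0) (t N)
      · by_cases hy2 : ∃ i, i ≤ N ∧ (y : ℝ) = t i
        · obtain ⟨i, hiN, hyi⟩ := hy2
          have hyg : y = g i := Subtype.ext (by rw [hyi, hg i hiN])
          have hmem3 : y ∈ IccI I (t i) (t i) := ⟨le_of_eq hyi.symm, le_of_eq hyi⟩
          have hsingle : ENNReal.ofReal (φ y) ≤ ∑ i ∈ Finset.range (N+1),
              (IccI I (t i) (t i)).indicator (fun _ => ENNReal.ofReal (c i)) y := by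
            refine le_trans ?_ (Finset.single_le_sum
              (f := fun i => (IccI I (t i) (t i)).indicator (fun _ => ENNReal.ofReal (c i)) y)
              (fun j _ => zero_le) (Finset.mem_range.mpr (show i < N+1 by omega)))
            show ENNReal.ofReal (φ y)
              ≤ (IccI I (t i) (t i)).indicator (fun _ => ENNReal.ofReal (c i)) y
            rw [Set.indicator_of_mem hmem3]
            apply ENNReal.ofReal_le_ofReal
            rw [hyg]
          exact le_trans hsingle (le_add_left le_rfl)
        · push_neg at hy2
          obtain ⟨i, hiN, h1, h2⟩ := exists_bracket_strict (fun i => (t i : ℝ)) N (y : ℝ)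
            hNpos hy.1 hy.2 (fun i hi => hy2 i hi)
          have hymem : y ∈ IooI I (t i) (t (i+1)) := ⟨h1, h2⟩
          have hfirst : ENNReal.ofReal (c i - ε) ≤ ∑ i ∈ Finset.range N,
              (IooI I (t i) (t (i+1))).indicator (fun _ => ENNReal.ofReal (c i - ε)) y := by
            refine le_trans ?_ (Finset.single_le_sum
              (f := fun i => (IooI I (t i) (t (i+1))).indicator (fun _ => ENNReal.ofReal (c i - ε)) y)
              (fun j _ => zero_le) (Finset.mem_range.mpr hiN))
            show ENNReal.ofReal (c i - ε)
              ≤ (IooI I (t i) (t (i+1))).indicator (fun _ => ENNReal.ofReal (c i - ε)) y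
            rw [Set.indicator_of_mem hymem]
          have hsecond : (IccI I (t 0) (t N)).indicator (fun _ => ENNReal.ofReal (2 * ε)) y
              = ENNReal.ofReal (2 * ε) := Set.indicator_of_mem hy _
          have hφy : ENNReal.ofReal (φ y) ≤ ENNReal.ofReal (c i - ε) + ENNReal.ofReal (2 * ε) := by
            have hcl := hφclose i hiN y (le_of_lt h1) (le_of_lt h2)
            rw [abs_lt] at hcl
            calc ENNReal.ofReal (φ y) ≤ ENNReal.ofReal ((c i - ε) + 2 * ε) :=
                ENNReal.ofReal_le_ofReal (by linarith [hcl.1])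
              _ ≤ ENNReal.ofReal (c i - ε) + ENNReal.ofReal (2 * ε) := ENNReal.ofReal_add_le
          calc ENNReal.ofReal (φ y) ≤ ENNReal.ofReal (c i - ε) + ENNReal.ofReal (2 * ε) := hφy
            _ ≤ (∑ i ∈ Finset.range N,
                  (IooI I (t i) (t (i+1))).indicator (fun _ => ENNReal.ofReal (c i - ε)) y)
                + (IccI I (t 0) (t N)).indicator (fun _ => ENNReal.ofReal (2 * ε)) y := by
                rw [hsecond]; exact add_le_add hfirst le_rfl
            _ ≤ _ := le_add_right le_rfl
      · have h0 : φ y = 0 := image_eq_zero_of_notMem_tsupport (fun hc => hy (hKsub2 hc))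
        simp [h0]
    -- integral comparisons
    have hLo_le : ∀ μ : Measure ↥I,
        (∑ i ∈ Finset.range N, ENNReal.ofReal (c i - ε) * μ (IooI I (t i) (t (i+1))))
          ≤ ∫⁻ y, ENNReal.ofReal (φ y) ∂μ := by
      intro μ
      rw [← hsumIoo μ (fun i => c i - ε)]
      exact lintegral_mono hL1pt
    have hUp_ge : ∀ μ : Measure ↥I, ∫⁻ y, ENNReal.ofReal (φ y) ∂μ
        ≤ ∑ i ∈ Finset.range N, ENNReal.ofReal (c i + ε) * μ (IccI I (t i) (t (i+1))) := by
      intro μ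
      rw [← hsumIcc μ (fun i => c i + ε)]
      exact lintegral_mono (hL2pt μ)
    have hL3int : L ≤ (∑ i ∈ Finset.range N,
          ENNReal.ofReal (c i - ε) * m (IooI I (t i) (t (i+1))))
        + ENNReal.ofReal (2 * ε) * m (IccI I (t 0) (t N))
        + (∑ i ∈ Finset.range (N+1), ENNReal.ofReal (c i) * m (IccI I (t i) (t i))) := by
      have hm1 : Measurable (fun y => ∑ i ∈ Finset.range N,
          (IooI I (t i) (t (i+1))).indicator (fun _ => ENNReal.ofReal (c i - ε)) y) := by
        apply Finset.measurable_sum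
        intro i _
        exact hmeasInd _ (measurableSet_IooI I _ _) _
      have hm2 : Measurable ((IccI I (t 0) (t N)).indicator
          (fun _ => ENNReal.ofReal (2 * ε))) := hmeasInd _ (measurableSet_IccI I _ _) _
      calc L ≤ ∫⁻ y, ((∑ i ∈ Finset.range N,
            (IooI I (t i) (t (i+1))).indicator (fun _ => ENNReal.ofReal (c i - ε)) y)
          + (IccI I (t 0) (t N)).indicator (fun _ => ENNReal.ofReal (2 * ε)) y
          + (∑ i ∈ Finset.range (N+1),
            (IccI I (t i) (t i)).indicator (fun _ => ENNReal.ofReal (c i)) y)) ∂m :=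
          lintegral_mono hL3pt
        _ = _ := by
          rw [lintegral_add_left (hm1.fun_add hm2), lintegral_add_left hm1,
            hsumIoo m (fun i => c i - ε), hsumAt,
            lintegral_indicator_const (measurableSet_IccI I _ _)]
    have hAt_le : (∑ i ∈ Finset.range (N+1), ENNReal.ofReal (c i) * m (IccI I (t i) (t i)))
        ≤ ENNReal.ofReal (C * ε) := by
      calc ∑ i ∈ Finset.range (N+1), ENNReal.ofReal (c i) * m (IccI I (t i) (t i))
          ≤ ∑ _i ∈ Finset.range (N+1),
              ENNReal.ofReal C * ENNReal.ofReal (ε / ((N : ℝ) + 1)) := by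
            apply Finset.sum_le_sum
            intro i hi
            exact mul_le_mul' (ENNReal.ofReal_le_ofReal (hcC i))
              (hatom i (by have := Finset.mem_range.mp hi; omega))
        _ = ((N+1 : ℕ) : ℝ≥0∞) * (ENNReal.ofReal C * ENNReal.ofReal (ε / ((N : ℝ) + 1))) := by
            rw [Finset.sum_const, Finset.card_range, nsmul_eq_mul]
        _ ≤ ENNReal.ofReal (C * ε) := by
            rw [← ENNReal.ofReal_mul hC0, ← ENNReal.ofReal_natCast,
              ← ENNReal.ofReal_mul (by positivity)]
            apply ENNReal.ofReal_le_ofReal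
            push_cast
            have hNpos' : (0 : ℝ) < (N : ℝ) + 1 := by positivity
            have heq : ((N : ℝ) + 1) * (C * (ε / ((N : ℝ) + 1))) = C * ε := by
              field_simp
            rw [heq]
    set γ : ℝ≥0∞ := ENNReal.ofReal (ε / (((N : ℝ) + 1) * (C + 1))) with hγdef
    have hγ0 : γ ≠ 0 := by
      rw [hγdef]
      exact (ENNReal.ofReal_pos.mpr (by positivity)).ne'
    have hNKγ : (N : ℝ≥0∞) * (ENNReal.ofReal (C + 1) * γ) ≤ ENNReal.ofReal ε := by
      rw [hγdef, ← ENNReal.ofReal_mul (by linarith), ← ENNReal.ofReal_natCast,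
        ← ENNReal.ofReal_mul (by positivity)]
      apply ENNReal.ofReal_le_ofReal
      have hNpos' : (0 : ℝ) < (N : ℝ) + 1 := by positivity
      have hC1 : C + 1 ≠ 0 := by positivity
      have hN1 : ((N : ℝ) + 1) ≠ 0 := by positivity
      have heq : (C + 1) * (ε / (((N : ℝ) + 1) * (C + 1))) = ε / ((N : ℝ) + 1) := by
        field_simp
      rw [heq, mul_div_assoc', div_le_iff₀ hNpos']
      nlinarith
    have hPccfin : ∀ i, i < N → m (IccI I (t i) (t (i+1))) ≠ ∞ := fun i hi =>
      ne_top_of_le_ne_top hM (measure_mono (hPccAB i hi))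
    have hPiofin : ∀ i, i < N → m (IooI I (t i) (t (i+1))) ≠ ∞ := fun i hi =>
      ne_top_of_le_ne_top hM (measure_mono ((hPioPcc i).trans (hPccAB i hi)))
    have hev1 : ∀ᶠ n in atTop, ∀ i ∈ Finset.range N,
        m (IooI I (t i) (t (i+1))) ≤ u n (IooI I (t i) (t (i+1))) + γ := by
      rw [eventually_all_finset]
      intro i hiF
      have hiN : i < N := Finset.mem_range.mp hiF
      by_cases hcase : m (IooI I (t i) (t (i+1))) ≤ γ
      · exact Eventually.of_forall fun n => le_trans hcase (le_add_left le_rfl)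
      · push_neg at hcase
        have hne0 : m (IooI I (t i) (t (i+1))) ≠ 0 :=
          (lt_of_le_of_lt zero_le hcase).ne'
        have hlt : m (IooI I (t i) (t (i+1))) - γ < m (IooI I (t i) (t (i+1))) :=
          ENNReal.sub_lt_self (hPiofin i hiN) hne0 hγ0
        have hev := hIoo (t i) (t (i+1)) (hmemI i (by omega)) (hmemI (i+1) (by omega))
          (hstep i hiN) _ hlt
        filter_upwards [hev] with n hn
        calc m (IooI I (t i) (t (i+1)))
            = (m (IooI I (t i) (t (i+1))) - γ) + γ :=
              (tsub_add_cancel_of_le (le_of_lt hcase)).symm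
          _ ≤ u n (IooI I (t i) (t (i+1))) + γ := add_le_add (le_of_lt hn) le_rfl
    have hev2 : ∀ᶠ n in atTop, ∀ i ∈ Finset.range N,
        u n (IccI I (t i) (t (i+1))) ≤ m (IccI I (t i) (t (i+1))) + γ := by
      rw [eventually_all_finset]
      intro i hiF
      have hiN : i < N := Finset.mem_range.mp hiF
      have hlt : m (IccI I (t i) (t (i+1))) < m (IccI I (t i) (t (i+1))) + γ :=
        ENNReal.lt_add_right (hPccfin i hiN) hγ0
      have hev := hIcc (t i) (t (i+1)) (hmemI i (by omega)) (hmemI (i+1) (by omega))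
        (le_of_lt (hstep i hiN)) _ hlt
      filter_upwards [hev] with n hn
      exact le_of_lt hn
    have hSio : (∑ i ∈ Finset.range N, m (IooI I (t i) (t (i+1)))) ≤ m (IccI I A B) := by
      have hdisjoint : (Finset.range N : Set ℕ).PairwiseDisjoint
          (fun i => IooI I (t i) (t (i+1))) := by
        intro i hi j hj hij
        simp only [Finset.coe_range, Set.mem_Iio] at hi hj
        apply Set.disjoint_left.mpr
        rintro y hyi hyj
        rcases lt_or_gt_of_ne hij with h | h
        · have hle : (t (i+1) : ℝ) ≤ t j := hmono (i+1) j (by omega) (by omega)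
          have h1 := hyi.2; have h2 := hyj.1
          linarith
        · have hle : (t (j+1) : ℝ) ≤ t i := hmono (j+1) i (by omega) (by omega)
          have h1 := hyj.2; have h2 := hyi.1
          linarith
      rw [← measure_biUnion_finset hdisjoint (fun i _ => measurableSet_IooI I _ _)]
      apply measure_mono
      intro y hy
      simp only [Set.mem_iUnion] at hy
      obtain ⟨i, hiF, hyi⟩ := hy
      exact ((hPioPcc i).trans (hPccAB i (Finset.mem_range.mp hiF))) hyi
    have hUpLo : (∑ i ∈ Finset.range N, ENNReal.ofReal (c i + ε) * m (IccI I (t i) (t (i+1))))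
        ≤ (∑ i ∈ Finset.range N, ENNReal.ofReal (c i - ε) * m (IooI I (t i) (t (i+1))))
          + ENNReal.ofReal (2 * ε) * m (IccI I A B) + ENNReal.ofReal (2 * (C + 1) * ε) := by
      have hsplit : ∀ i, i < N → m (IccI I (t i) (t (i+1)))
          ≤ m (IooI I (t i) (t (i+1)))
            + (m (IccI I (t i) (t i)) + m (IccI I (t (i+1)) (t (i+1)))) := by
        intro i hi
        calc m (IccI I (t i) (t (i+1)))
            ≤ m ((IooI I (t i) (t (i+1)))
                ∪ ((IccI I (t i) (t i)) ∪ (IccI I (t (i+1)) (t (i+1))))) := by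
              apply measure_mono
              rintro y ⟨h1, h2⟩
              rcases eq_or_lt_of_le h1 with heq | hlt1
              · exact Or.inr (Or.inl ⟨le_of_eq heq, le_of_eq heq.symm⟩)
              · rcases eq_or_lt_of_le h2 with heq2 | hlt2
                · exact Or.inr (Or.inr ⟨le_of_eq heq2.symm, le_of_eq heq2⟩)
                · exact Or.inl ⟨hlt1, hlt2⟩
          _ ≤ _ := le_trans (measure_union_le _ _)
              (add_le_add le_rfl (measure_union_le _ _))
      have hcoef : ∀ i, ENNReal.ofReal (c i + ε)
          ≤ ENNReal.ofReal (c i - ε) + ENNReal.ofReal (2 * ε) := by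
        intro i
        have h : c i + ε = (c i - ε) + 2 * ε := by ring
        rw [h]
        exact ENNReal.ofReal_add_le
      calc ∑ i ∈ Finset.range N, ENNReal.ofReal (c i + ε) * m (IccI I (t i) (t (i+1)))
          ≤ ∑ i ∈ Finset.range N, (ENNReal.ofReal (c i + ε) * m (IooI I (t i) (t (i+1)))
              + ENNReal.ofReal (C + 1)
                * (m (IccI I (t i) (t i)) + m (IccI I (t (i+1)) (t (i+1))))) := by
            apply Finset.sum_le_sum
            intro i hiF
            have hiN := Finset.mem_range.mp hiF
            calc ENNReal.ofReal (c i + ε) * m (IccI I (t i) (t (i+1)))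
                ≤ ENNReal.ofReal (c i + ε) * (m (IooI I (t i) (t (i+1)))
                    + (m (IccI I (t i) (t i)) + m (IccI I (t (i+1)) (t (i+1))))) :=
                  mul_le_mul_right (hsplit i hiN) _
              _ = ENNReal.ofReal (c i + ε) * m (IooI I (t i) (t (i+1)))
                  + ENNReal.ofReal (c i + ε)
                    * (m (IccI I (t i) (t i)) + m (IccI I (t (i+1)) (t (i+1)))) :=
                  mul_add _ _ _
              _ ≤ _ := add_le_add le_rfl (mul_le_mul_left
                  (ENNReal.ofReal_le_ofReal (by linarith [hcC i])) _)
        _ = (∑ i ∈ Finset.range N, ENNReal.ofReal (c i + ε) * m (IooI I (t i) (t (i+1))))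
            + ∑ i ∈ Finset.range N, ENNReal.ofReal (C + 1)
              * (m (IccI I (t i) (t i)) + m (IccI I (t (i+1)) (t (i+1)))) :=
            Finset.sum_add_distrib
        _ ≤ ((∑ i ∈ Finset.range N, ENNReal.ofReal (c i - ε) * m (IooI I (t i) (t (i+1))))
            + ENNReal.ofReal (2 * ε) * m (IccI I A B)) + ENNReal.ofReal (2 * (C + 1) * ε) := by
            apply add_le_add
            · calc ∑ i ∈ Finset.range N, ENNReal.ofReal (c i + ε) * m (IooI I (t i) (t (i+1)))
                  ≤ ∑ i ∈ Finset.range N, (ENNReal.ofReal (c i - ε) + ENNReal.ofReal (2 * ε))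
                      * m (IooI I (t i) (t (i+1))) :=
                    Finset.sum_le_sum fun i _ => mul_le_mul_left (hcoef i) _
                _ = (∑ i ∈ Finset.range N, ENNReal.ofReal (c i - ε) * m (IooI I (t i) (t (i+1))))
                    + ∑ i ∈ Finset.range N, ENNReal.ofReal (2 * ε) * m (IooI I (t i) (t (i+1))) := by
                    rw [← Finset.sum_add_distrib]
                    exact Finset.sum_congr rfl fun i _ => add_mul _ _ _
                _ ≤ _ := by
                    apply add_le_add le_rfl
                    rw [← Finset.mul_sum]
                    exact mul_le_mul_right hSio _
            · calc ∑ i ∈ Finset.range N, ENNReal.ofReal (C + 1)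
                  * (m (IccI I (t i) (t i)) + m (IccI I (t (i+1)) (t (i+1))))
                  ≤ ∑ _i ∈ Finset.range N, ENNReal.ofReal (C + 1)
                      * (ENNReal.ofReal (ε / ((N : ℝ) + 1))
                        + ENNReal.ofReal (ε / ((N : ℝ) + 1))) := by
                    apply Finset.sum_le_sum
                    intro i hiF
                    have hiN := Finset.mem_range.mp hiF
                    exact mul_le_mul_right
                      (add_le_add (hatom i (by omega)) (hatom (i+1) (by omega))) _
                _ = (N : ℝ≥0∞) * (ENNReal.ofReal (C + 1)
                    * (ENNReal.ofReal (ε / ((N : ℝ) + 1)) + ENNReal.ofReal (ε / ((N : ℝ) + 1)))) := by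
                    rw [Finset.sum_const, Finset.card_range, nsmul_eq_mul]
                _ ≤ ENNReal.ofReal (2 * (C + 1) * ε) := by
                    rw [← ENNReal.ofReal_add (by positivity) (by positivity),
                      ← ENNReal.ofReal_mul (by linarith), ← ENNReal.ofReal_natCast,
                      ← ENNReal.ofReal_mul (by positivity)]
                    apply ENNReal.ofReal_le_ofReal
                    have hNpos' : (0 : ℝ) < (N : ℝ) + 1 := by positivity
                    have heq2 : (C + 1) * (ε / ((N:ℝ)+1) + ε / ((N:ℝ)+1))
                        = 2*(C+1)*ε / ((N:ℝ)+1) := by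
                      field_simp; ring
                    rw [heq2, mul_div_assoc', div_le_iff₀ hNpos']
                    nlinarith [mul_nonneg (show (0:ℝ) ≤ C + 1 by linarith) hε0.le]
        _ = _ := by rw [add_assoc]
    -- assemble
    filter_upwards [hev1, hev2] with n hn1 hn2
    have hcoefC : ∀ (w : ℝ), w ≤ C → -1 ≤ 0 →
        ENNReal.ofReal w ≤ ENNReal.ofReal (C + 1) := fun w hw _ =>
      ENNReal.ofReal_le_ofReal (by linarith)
    have hLoLo : (∑ i ∈ Finset.range N, ENNReal.ofReal (c i - ε) * m (IooI I (t i) (t (i+1))))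
        ≤ (∑ i ∈ Finset.range N, ENNReal.ofReal (c i - ε) * u n (IooI I (t i) (t (i+1))))
          + ENNReal.ofReal ε := by
      refine le_trans (sum_mul_add_le (fun i => ENNReal.ofReal (c i - ε))
        (fun i => m (IooI I (t i) (t (i+1)))) (fun i => u n (IooI I (t i) (t (i+1))))
        γ (ENNReal.ofReal (C + 1))
        (fun i _ => ENNReal.ofReal_le_ofReal (by linarith [hcC i, hε0])) hn1) ?_
      exact add_le_add le_rfl hNKγ
    have hUpUp : (∑ i ∈ Finset.range N, ENNReal.ofReal (c i + ε) * u n (IccI I (t i) (t (i+1))))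
        ≤ (∑ i ∈ Finset.range N, ENNReal.ofReal (c i + ε) * m (IccI I (t i) (t (i+1))))
          + ENNReal.ofReal ε := by
      refine le_trans (sum_mul_add_le (fun i => ENNReal.ofReal (c i + ε))
        (fun i => u n (IccI I (t i) (t (i+1)))) (fun i => m (IccI I (t i) (t (i+1))))
        γ (ENNReal.ofReal (C + 1))
        (fun i _ => ENNReal.ofReal_le_ofReal (by linarith [hcC i, hε1])) hn2) ?_
      exact add_le_add le_rfl hNKγ
    constructor
    · calc L ≤ (∑ i ∈ Finset.range N, ENNReal.ofReal (c i - ε) * m (IooI I (t i) (t (i+1))))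
            + ENNReal.ofReal (2 * ε) * m (IccI I (t 0) (t N))
            + (∑ i ∈ Finset.range (N+1), ENNReal.ofReal (c i) * m (IccI I (t i) (t i))) := hL3int
        _ ≤ (((∑ i ∈ Finset.range N, ENNReal.ofReal (c i - ε) * u n (IooI I (t i) (t (i+1))))
            + ENNReal.ofReal ε)
            + ENNReal.ofReal (2 * ε) * m (IccI I A B)) + ENNReal.ofReal (C * ε) :=
            add_le_add (add_le_add hLoLo
              (mul_le_mul_right (measure_mono hT0TNAB) _)) hAt_le
        _ ≤ (((∫⁻ y, ENNReal.ofReal (φ y) ∂(u n)) + ENNReal.ofReal ε)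
            + ENNReal.ofReal (2 * ε) * m (IccI I A B)) + ENNReal.ofReal (C * ε) :=
            add_le_add (add_le_add (add_le_add (hLo_le (u n)) le_rfl) le_rfl) le_rfl
        _ ≤ (∫⁻ y, ENNReal.ofReal (φ y) ∂(u n)) + ENNReal.ofReal (ε * D) := by
            rw [hMeq, add_assoc, add_assoc]
            apply add_le_add_right
            rw [← ENNReal.ofReal_mul (by linarith), ← ENNReal.ofReal_add (by positivity)
              (by positivity), ← ENNReal.ofReal_add (by positivity) (by positivity)]
            apply ENNReal.ofReal_le_ofReal
            rw [hDdef]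
            nlinarith [hM'0, hC0, hε0]
    · calc ∫⁻ y, ENNReal.ofReal (φ y) ∂(u n)
          ≤ ∑ i ∈ Finset.range N, ENNReal.ofReal (c i + ε) * u n (IccI I (t i) (t (i+1))) :=
            hUp_ge (u n)
        _ ≤ (∑ i ∈ Finset.range N, ENNReal.ofReal (c i + ε) * m (IccI I (t i) (t (i+1))))
            + ENNReal.ofReal ε := hUpUp
        _ ≤ (((∑ i ∈ Finset.range N, ENNReal.ofReal (c i - ε) * m (IooI I (t i) (t (i+1))))
            + ENNReal.ofReal (2 * ε) * m (IccI I A B)) + ENNReal.ofReal (2 * (C + 1) * ε))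
            + ENNReal.ofReal ε := add_le_add hUpLo le_rfl
        _ ≤ ((L + ENNReal.ofReal (2 * ε) * m (IccI I A B)) + ENNReal.ofReal (2 * (C + 1) * ε))
            + ENNReal.ofReal ε :=
            add_le_add (add_le_add (add_le_add (hLo_le m) le_rfl) le_rfl) le_rfl
        _ ≤ L + ENNReal.ofReal (ε * D) := by
            rw [hMeq, add_assoc, add_assoc]
            apply add_le_add_right
            rw [← ENNReal.ofReal_mul (by linarith), ← ENNReal.ofReal_add (by positivity)
              (by positivity), ← ENNReal.ofReal_add (by positivity) (by positivity)]
            apply ENNReal.ofReal_le_ofReal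
            rw [hDdef]
            nlinarith [hM'0, hC0, hε0]

  rw [tendsto_order]
  constructor
  · intro b hb
    obtain ⟨ε, hε0, hε1, hlt⟩ := exists_eps_add_lt hb hLne hD0
    filter_upwards [claim ε hε0 hε1] with n hn
    exact (ENNReal.add_lt_add_iff_right ENNReal.ofReal_ne_top).mp
      (lt_of_lt_of_le hlt hn.1)
  · intro dd hdd
    rcases eq_or_ne dd ∞ with rfl | hddne
    · filter_upwards [claim 1 one_pos le_rfl] with n hn
      exact lt_of_le_of_lt hn.2
        (ENNReal.add_lt_top.mpr ⟨lt_top_iff_ne_top.mpr hLne, ENNReal.ofReal_lt_top⟩)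
    · obtain ⟨ε, hε0, hε1, hlt⟩ := exists_eps_add_lt hdd hddne hD0
      filter_upwards [claim ε hε0 hε1] with n hn
      exact lt_of_le_of_lt hn.2 hlt


lemma tendsto_integral_of_theta (hIopen : IsOpen I) (hIconn : I.OrdConnected)
    (u : ℕ → Measure ↥I) (m : Measure ↥I)
    (hu : ∀ n, IsLocFiniteM I (u n)) (hm : IsLocFiniteM I m)
    (h : Tendsto u atTop (𝓝 m))
    {φ : ↥I → ℝ} (hφc : Continuous φ) (hφs : HasCompactSupport φ) :
    Tendsto (fun n => ∫ y, φ y ∂(u n)) atTop (𝓝 (∫ y, φ y ∂m)) := by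
  have hIoo' : ∀ (a b : ℚ), (a : ℝ) ∈ I → (b : ℝ) ∈ I → (a : ℝ) < b → ∀ c : ℝ≥0∞,
      c < m (IooI I a b) → ∀ᶠ n in atTop, c < u n (IooI I a b) := by
    intro a b ha hb hab c hc
    exact (tendsto_theta_iff.mp h) _ (Or.inl ⟨a, b, c, ha, hb, hab, rfl⟩) hc
  have hIcc' : ∀ (a b : ℚ), (a : ℝ) ∈ I → (b : ℝ) ∈ I → (a : ℝ) ≤ b → ∀ d : ℝ≥0∞,
      m (IccI I a b) < d → ∀ᶠ n in atTop, u n (IccI I a b) < d := by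
    intro a b ha hb hab d hd
    exact (tendsto_theta_iff.mp h) _ (Or.inr ⟨a, b, d, ha, hb, hab, rfl⟩) hd
  -- split φ into positive and negative parts
  set φp : ↥I → ℝ := fun y => max (φ y) 0 with hφpdef
  set φm : ↥I → ℝ := fun y => max (-φ y) 0 with hφmdef
  have hφp_c : Continuous φp := hφc.max continuous_const
  have hφm_c : Continuous φm := hφc.neg.max continuous_const
  have hφp_s : HasCompactSupport φp := hφs.mono (by
    intro x hx
    simp only [hφpdef, Function.mem_support] at hx ⊢
    intro h0
    apply hx
    rw [h0, max_self])
  have hφm_s : HasCompactSupport φm := hφs.mono (by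
    intro x hx
    simp only [hφmdef, Function.mem_support] at hx ⊢
    intro h0
    apply hx
    rw [h0, neg_zero, max_self])
  have hφp_nn : ∀ y, 0 ≤ φp y := fun y => le_max_right _ _
  have hφm_nn : ∀ y, 0 ≤ φm y := fun y => le_max_right _ _
  have key : ∀ ψ : ↥I → ℝ, Continuous ψ → HasCompactSupport ψ → (∀ y, 0 ≤ ψ y) →
      Tendsto (fun n => ∫ y, ψ y ∂(u n)) atTop (𝓝 (∫ y, ψ y ∂m)) := by
    intro ψ hψc hψs hψ0
    have hp := key_lintegral_tendsto hIopen hIconn u m hm hIoo' hIcc' hψc hψs hψ0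
    have heq : ∀ (μ : Measure ↥I), IsLocFiniteM I μ →
        ENNReal.ofReal (∫ y, ψ y ∂μ) = ∫⁻ y, ENNReal.ofReal (ψ y) ∂μ := fun μ hμ =>
      ofReal_integral_eq_lintegral_ofReal (integrable_of_cont μ hμ hψc hψs)
        (Filter.Eventually.of_forall hψ0)
    have hfin : (∫⁻ y, ENNReal.ofReal (ψ y) ∂m) ≠ ∞ := by
      rw [← heq m hm]; exact ENNReal.ofReal_ne_top
    have htoReal : Tendsto (fun n => (∫⁻ y, ENNReal.ofReal (ψ y) ∂(u n)).toReal) atTop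
        (𝓝 ((∫⁻ y, ENNReal.ofReal (ψ y) ∂m).toReal)) :=
      (ENNReal.tendsto_toReal hfin).comp hp
    have hrw : ∀ (μ : Measure ↥I), IsLocFiniteM I μ →
        (∫⁻ y, ENNReal.ofReal (ψ y) ∂μ).toReal = ∫ y, ψ y ∂μ := by
      intro μ hμ
      rw [← heq μ hμ, ENNReal.toReal_ofReal]
      exact integral_nonneg hψ0
    rw [hrw m hm] at htoReal
    convert htoReal using 2 with n
    exact (hrw (u n) (hu n)).symm
  have hsub : ∀ y, φ y = φp y - φm y := by
    intro y
    simp only [hφpdef, hφmdef]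
    rcases le_total (φ y) 0 with h | h
    · rw [max_eq_right h, max_eq_left (by linarith)]; ring
    · rw [max_eq_left h, max_eq_right (by linarith)]; ring
  have hintrw : ∀ (μ : Measure ↥I), IsLocFiniteM I μ →
      ∫ y, φ y ∂μ = (∫ y, φp y ∂μ) - ∫ y, φm y ∂μ := by
    intro μ hμ
    rw [← integral_sub (integrable_of_cont μ hμ hφp_c hφp_s)
      (integrable_of_cont μ hμ hφm_c hφm_s)]
    exact integral_congr_ae (Filter.Eventually.of_forall fun y => hsub y)
  have := (key φp hφp_c hφp_s hφp_nn).sub (key φm hφm_c hφm_s hφm_nn)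
  rw [← hintrw m hm] at this
  convert this using 2 with n
  exact hintrw (u n) (hu n)

end Stmt9

open Stmt9 in
/-- On the subset of locally finite measures, the topology `ϑ` coincides with the vague
topology: a sequence of locally finite measures `ϑ`-converges to a locally finite `m`
iff `∫ φ dmₙ → ∫ φ dm` for every continuous compactly supported `φ` on `I`. -/
theorem stmt_9 (I : Set ℝ) (hIopen : IsOpen I) (hIconn : I.OrdConnected)
    (mseq : ℕ → MSpace I) (m : MSpace I)
    (hseq : ∀ n, IsLocFiniteM I (mseq n).1) (hm : IsLocFiniteM I m.1) :
    Filter.Tendsto mseq Filter.atTop (𝓝 m) ↔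
      ∀ φ : ↥I → ℝ, Continuous φ → HasCompactSupport φ →
        Filter.Tendsto (fun n => ∫ y, φ y ∂(mseq n).1) Filter.atTop
          (𝓝 (∫ y, φ y ∂m.1)) := by
  have hval : Tendsto mseq atTop (𝓝 m) ↔
      Tendsto (fun n => (mseq n).1) atTop (𝓝 m.1) :=
    Topology.IsInducing.subtypeVal.tendsto_nhds_iff
  constructor
  · intro h φ hφc hφs
    exact tendsto_integral_of_theta hIopen hIconn (fun n => (mseq n).1) m.1
      hseq hm (hval.mp h) hφc hφs
  · intro h
    exact hval.mpr (tendsto_theta_of_integrals hIopen hIconn (fun n => (mseq n).1) m.1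
      m.2 hseq hm h)
end
end
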